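/- arXiv:1306.5636 — 11 statements merged into one kernel-verified Lean document; each statement's English description precedes it below -/
import Mathlib

section
/- For all n ≥ r+1 ≥ 2, CC(n,r) ≤ 2·C(n,r) − 1. -/
open Finset

/-- An (n,k,r)-covering: a family of k-subsets of {1,…,n} such that every
r-subset of {1,…,n} is contained in at least one block. -/
def IsCovering (n k r : ℕ) (B : Finset (Finset ℕ)) : Prop :=
  (∀ b ∈ B, b ⊆ Finset.Icc 1 n ∧ b.card = k) ∧
  ∀ s ⊆ Finset.Icc 1 n, s.card = r → ∃ b ∈ B, s ⊆ b

/-- The block graph: blocks adjacent if they share an r-subset (i.e. their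
intersection has at least r elements). The family is connected if this graph is. -/
def IsConnectedFamily (r : ℕ) (B : Finset (Finset ℕ)) : Prop :=
  (SimpleGraph.fromRel (fun b c : B => r ≤ ((b : Finset ℕ) ∩ (c : Finset ℕ)).card)).Connected

/-- The covering number C(n,k,r). -/
noncomputable def coveringNum (n k r : ℕ) : ℕ :=
  sInf {m | ∃ B : Finset (Finset ℕ), IsCovering n k r B ∧ B.card = m}

/-- C(n,r) := C(n,r+1,r). -/
noncomputable def cNum (n r : ℕ) : ℕ := coveringNum n (r+1) r

/-- The connected covering number CC(n,r). -/
noncomputable def ccNum (n r : ℕ) : ℕ :=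
  sInf {m | ∃ B : Finset (Finset ℕ),
    IsCovering n (r+1) r B ∧ IsConnectedFamily r B ∧ B.card = m}

/-!
Start from a minimum covering `B`. As long as its block graph is disconnected, take two blocks
`b`, `c` in different components meeting in as many points as possible. They meet in exactly
`r - 1` points: otherwise a block of `B` covering `r - 1` points of `b` (including `b ∩ c`) and
one point of `c \ b` would meet both `b` and `c` in more points, hence lie in both components.
So `(b ∩ c) ∪ {x, y}` with `x ∈ b \ c`, `y ∈ c \ b` is a new block adjacent to both, and adding
it merges two components. Connecting the at most `#B` components costs at most `#B - 1` blocks.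
-/

open SimpleGraph

namespace Finset

variable {α : Type*} [DecidableEq α]

lemma sdiff_nonempty_of_ne_of_card_le {b c : Finset α} (hne : b ≠ c) (h : #c ≤ #b) :
    (b \ c).Nonempty :=
  sdiff_nonempty.2 fun hsub => hne (eq_of_subset_of_card_le hsub h)

lemma exists_card_inter_ge_of_card_inter_add_one_eq {r : ℕ} {b c : Finset α}
    (hb : #b = r + 1) (hc : #c = r + 1) (hbc : #(b ∩ c) + 1 = r) :
    ∃ d ⊆ b ∪ c, #d = r + 1 ∧ r ≤ #(d ∩ b) ∧ r ≤ #(d ∩ c) := by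
  have hne : b ≠ c := by rintro rfl; rw [inter_self] at hbc; omega
  obtain ⟨x, hx⟩ := sdiff_nonempty_of_ne_of_card_le hne (by omega)
  obtain ⟨y, hy⟩ := sdiff_nonempty_of_ne_of_card_le hne.symm (by omega)
  rw [mem_sdiff] at hx hy
  have hxy : x ≠ y := by rintro rfl; exact hy.2 hx.1
  have hx' : x ∉ b ∩ c := fun h => hx.2 (mem_inter.1 h).2
  have hy' : y ∉ b ∩ c := fun h => hy.2 (mem_inter.1 h).1
  refine ⟨insert x (insert y (b ∩ c)), ?_, ?_, ?_, ?_⟩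
  · exact insert_subset (mem_union_left _ hx.1) <|
      insert_subset (mem_union_right _ hy.1) (inter_subset_left.trans subset_union_left)
  · rw [card_insert_of_notMem (by simp [hxy, hx']), card_insert_of_notMem hy']
    omega
  · calc r = #(insert x (b ∩ c)) := by rw [card_insert_of_notMem hx']; omega
      _ ≤ _ := card_le_card fun z => by simp only [mem_insert, mem_inter]; rintro (rfl | h) <;> tauto
  · calc r = #(insert y (b ∩ c)) := by rw [card_insert_of_notMem hy']; omega
      _ ≤ _ := card_le_card fun z => by simp only [mem_insert, mem_inter]; rintro (rfl | h) <;> tauto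

end Finset

lemma IsCovering.insert_block {n k r : ℕ} {B : Finset (Finset ℕ)} (hB : IsCovering n k r B)
    {d : Finset ℕ} (hd : d ⊆ Icc 1 n) (hdk : #d = k) : IsCovering n k r (insert d B) := by
  refine ⟨fun b hb => ?_, fun s hs hsr => ?_⟩
  · rcases mem_insert.1 hb with rfl | hb
    exacts [⟨hd, hdk⟩, hB.1 b hb]
  · obtain ⟨b, hb, hsb⟩ := hB.2 s hs hsr
    exact ⟨b, mem_insert_of_mem hb, hsb⟩

lemma isCovering_powersetCard {n r : ℕ} (hn : r + 1 ≤ n) :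
    IsCovering n (r + 1) r ((Icc 1 n).powersetCard (r + 1)) := by
  refine ⟨fun b hb => mem_powersetCard.1 hb, fun s hs hsr => ?_⟩
  obtain ⟨b, hsb, hb, hbr⟩ := exists_subsuperset_card_eq hs (n := r + 1) (by omega) (by simpa)
  exact ⟨b, mem_powersetCard.2 ⟨hb, hbr⟩, hsb⟩

lemma IsCovering.nonempty {n k r : ℕ} {B : Finset (Finset ℕ)} (hB : IsCovering n k r B)
    (hr : r ≤ n) : B.Nonempty := by
  obtain ⟨s, hs, hsr⟩ := exists_subset_card_eq (s := Icc 1 n) (n := r) (by simpa)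
  obtain ⟨b, hb, -⟩ := hB.2 s hs hsr
  exact ⟨b, hb⟩

lemma IsCovering.exists_mem_card_inter_gt {n r : ℕ} {B : Finset (Finset ℕ)}
    (hB : IsCovering n (r + 1) r B) {b c : Finset ℕ} (hb : b ∈ B) (hc : c ∈ B)
    (hbc : #(b ∩ c) + 1 < r) : ∃ d ∈ B, #(b ∩ c) < #(b ∩ d) ∧ #(b ∩ c) < #(d ∩ c) := by
  obtain ⟨hbI, hbr⟩ := hB.1 b hb
  obtain ⟨hcI, hcr⟩ := hB.1 c hc
  obtain ⟨y, hy⟩ : (c \ b).Nonempty :=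
    sdiff_nonempty.2 fun hcb => by rw [inter_eq_right.2 hcb] at hbc; omega
  rw [mem_sdiff] at hy
  obtain ⟨w, hbcw, hwb, hw⟩ :=
    exists_subsuperset_card_eq (inter_subset_left : b ∩ c ⊆ b) (n := r - 1) (by omega) (by omega)
  have hyw : y ∉ w := fun h => hy.2 (hwb h)
  obtain ⟨d, hd, hwd⟩ := hB.2 (insert y w) (insert_subset (hcI hy.1) (hwb.trans hbI))
    (by rw [card_insert_of_notMem hyw]; omega)
  refine ⟨d, hd, ?_, ?_⟩
  · calc #(b ∩ c) < #w := by omega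
      _ ≤ #(b ∩ d) := card_le_card (subset_inter hwb ((subset_insert y w).trans hwd))
  · have hy' : y ∉ b ∩ c := fun h => hy.2 (mem_inter.1 h).1
    calc #(b ∩ c) < #(insert y (b ∩ c)) := by rw [card_insert_of_notMem hy']; omega
      _ ≤ #(d ∩ c) := card_le_card <| insert_subset
          (mem_inter.2 ⟨hwd (mem_insert_self y w), hy.1⟩)
          (subset_inter (hbcw.trans ((subset_insert y w).trans hwd)) inter_subset_right)

-- `IsConnectedFamily r B` is by definition `(blockGraph r B).Connected`. -/
def blockGraph (r : ℕ) (B : Finset (Finset ℕ)) : SimpleGraph B :=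
  SimpleGraph.fromRel fun b c : B => r ≤ #(b.1 ∩ c.1)

lemma blockGraph_adj {r : ℕ} {B : Finset (Finset ℕ)} {b c : B} :
    (blockGraph r B).Adj b c ↔ b ≠ c ∧ r ≤ #(b.1 ∩ c.1) := by
  simp [blockGraph, inter_comm c.1]

def blockGraphHomOfSubset (r : ℕ) {B B' : Finset (Finset ℕ)} (h : B ⊆ B') :
    blockGraph r B →g blockGraph r B' where
  toFun b := ⟨b, h b.2⟩
  map_rel' hbc := by
    rw [blockGraph_adj] at hbc ⊢
    exact ⟨fun he => hbc.1 (Subtype.ext (Subtype.mk.inj he)), hbc.2⟩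

lemma card_connectedComponent_blockGraph_le (r : ℕ) (B : Finset (Finset ℕ)) :
    Nat.card (blockGraph r B).ConnectedComponent ≤ #B := by
  calc Nat.card (blockGraph r B).ConnectedComponent ≤ Nat.card B :=
        Nat.card_le_card_of_surjective _ (ConnectedComponent.ind fun b => ⟨b, rfl⟩)
    _ = #B := Nat.card_eq_finsetCard B

lemma one_le_card_connectedComponent_blockGraph {r : ℕ} {B : Finset (Finset ℕ)}
    (hB : B.Nonempty) : 1 ≤ Nat.card (blockGraph r B).ConnectedComponent := by
  have : Nonempty B := hB.to_subtype
  exact Nat.card_pos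

lemma card_connectedComponent_blockGraph_insert_lt {r : ℕ} {B : Finset (Finset ℕ)}
    {d : Finset ℕ} (hd : d ∉ B) {b c : B} (hbc : ¬ (blockGraph r B).Reachable b c)
    (hdb : r ≤ #(d ∩ b)) (hdc : r ≤ #(d ∩ c)) :
    Nat.card (blockGraph r (insert d B)).ConnectedComponent <
      Nat.card (blockGraph r B).ConnectedComponent := by
  set ι := blockGraphHomOfSubset r (subset_insert d B)
  let D : (insert d B : Finset (Finset ℕ)) := ⟨d, mem_insert_self d B⟩
  have hD : ∀ e : B, r ≤ #(d ∩ e) → (blockGraph r (insert d B)).Reachable (ι e) D := by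
    intro e he
    refine (blockGraph_adj.2 ⟨fun h => hd ?_, ?_⟩).reachable
    · exact (show (e : Finset ℕ) = d from congrArg Subtype.val h) ▸ e.2
    · rwa [inter_comm]
  have hsurj : Function.Surjective (ConnectedComponent.map ι) := by
    refine ConnectedComponent.ind fun v => ?_
    rcases mem_insert.1 v.2 with hv | hv
    · refine ⟨(blockGraph r B).connectedComponentMk b, ?_⟩
      rw [ConnectedComponent.map_mk, ConnectedComponent.eq, show v = D from Subtype.ext hv]
      exact hD b hdb
    · exact ⟨(blockGraph r B).connectedComponentMk ⟨v, hv⟩, rfl⟩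
  have hninj : ¬ Function.Injective (ConnectedComponent.map ι) := fun hinj =>
    hbc <| ConnectedComponent.eq.1 <| hinj <| by
      simp only [ConnectedComponent.map_mk, ConnectedComponent.eq]
      exact (hD b hdb).trans (hD c hdc).symm
  have := Fintype.ofFinite (blockGraph r B).ConnectedComponent
  have := Fintype.ofFinite (blockGraph r (insert d B)).ConnectedComponent
  simpa only [Nat.card_eq_fintype_card] using
    Fintype.card_lt_of_surjective_not_injective _ hsurj hninj

lemma IsCovering.exists_not_reachable_card_inter_add_one_eq {n r : ℕ} {B : Finset (Finset ℕ)}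
    (hB : IsCovering n (r + 1) r B) (hB' : ¬ (blockGraph r B).Preconnected) :
    ∃ b c : B, ¬ (blockGraph r B).Reachable b c ∧ #(b.1 ∩ c.1) + 1 = r := by
  classical
  simp only [Preconnected, not_forall] at hB'
  obtain ⟨x, y, hxy⟩ := hB'
  obtain ⟨⟨b, c⟩, hbc, hmax⟩ :=
    (univ.filter fun p : B × B => ¬ (blockGraph r B).Reachable p.1 p.2).exists_max_image
      (fun p => #(p.1.1 ∩ p.2.1)) ⟨(x, y), by simpa⟩
  simp only [mem_filter, mem_univ, true_and, Prod.forall] at hbc hmax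
  have hreach : ∀ u v : B, #(b.1 ∩ c.1) < #(u.1 ∩ v.1) → (blockGraph r B).Reachable u v :=
    fun u v huv => by_contra fun h => (hmax u v h).not_gt huv
  refine ⟨b, c, hbc, ?_⟩
  have hlt : #(b.1 ∩ c.1) < r := by
    by_contra! h
    exact hbc (blockGraph_adj.2 ⟨by rintro rfl; exact hbc .rfl, h⟩).reachable
  by_contra hne
  obtain ⟨d, hd, hbd, hdc⟩ := hB.exists_mem_card_inter_gt b.2 c.2 (by omega)
  exact hbc ((hreach b ⟨d, hd⟩ hbd).trans (hreach ⟨d, hd⟩ c hdc))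

lemma IsCovering.exists_connected_card_add_one_le {n r : ℕ} {B : Finset (Finset ℕ)}
    (hB : IsCovering n (r + 1) r B) (hne : B.Nonempty) :
    ∃ B', IsCovering n (r + 1) r B' ∧ IsConnectedFamily r B' ∧
      #B' + 1 ≤ #B + Nat.card (blockGraph r B).ConnectedComponent := by
  induction hk : Nat.card (blockGraph r B).ConnectedComponent using Nat.strong_induction_on
    generalizing B with
  | _ k ih =>
  have hk1 := hk ▸ one_le_card_connectedComponent_blockGraph (r := r) hne
  by_cases hconn : (blockGraph r B).Connected
  · exact ⟨B, hB, hconn, by omega⟩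
  have : Nonempty B := hne.to_subtype
  obtain ⟨b, c, hbc, hbcr⟩ :=
    hB.exists_not_reachable_card_inter_add_one_eq fun h => hconn ⟨h⟩
  obtain ⟨hbI, hbr⟩ := hB.1 b b.2
  obtain ⟨hcI, hcr⟩ := hB.1 c c.2
  obtain ⟨d, hdbc, hd, hdb, hdc⟩ := exists_card_inter_ge_of_card_inter_add_one_eq hbr hcr hbcr
  have hdB : d ∉ B := by
    intro hdB
    have hbd : (blockGraph r B).Adj b ⟨d, hdB⟩ :=
      blockGraph_adj.2 ⟨fun h => by simp only [h] at hbcr; omega, by rwa [inter_comm]⟩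
    have hdc : (blockGraph r B).Adj ⟨d, hdB⟩ c :=
      blockGraph_adj.2 ⟨fun h => by simp only [← h, inter_comm] at hbcr; omega, hdc⟩
    exact hbc (hbd.reachable.trans hdc.reachable)
  have hlt := hk ▸ card_connectedComponent_blockGraph_insert_lt hdB hbc hdb hdc
  obtain ⟨B', hB', hconn', hcard⟩ :=
    ih _ hlt (hB.insert_block (hdbc.trans (union_subset hbI hcI)) hd) (insert_nonempty d B) rfl
  rw [card_insert_of_notMem hdB] at hcard
  exact ⟨B', hB', hconn', by omega⟩

lemma IsCovering.exists_card_eq_coveringNum {n k r : ℕ} {B : Finset (Finset ℕ)}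
    (hB : IsCovering n k r B) : ∃ B', IsCovering n k r B' ∧ #B' = coveringNum n k r :=
  Nat.sInf_mem (s := {m | ∃ B, IsCovering n k r B ∧ #B = m}) ⟨_, B, hB, rfl⟩

lemma ccNum_le_card {n r : ℕ} {B : Finset (Finset ℕ)} (hB : IsCovering n (r + 1) r B)
    (hconn : IsConnectedFamily r B) : ccNum n r ≤ #B :=
  Nat.sInf_le ⟨B, hB, hconn, rfl⟩

theorem stmt_1_general (n r : ℕ) (hn : r + 1 ≤ n) :
    ccNum n r ≤ 2 * cNum n r - 1 := by
  obtain ⟨B, hB, hBcard⟩ := (isCovering_powersetCard hn).exists_card_eq_coveringNum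
  obtain ⟨B', hB', hconn, hcard⟩ := hB.exists_connected_card_add_one_le (hB.nonempty (by omega))
  have hcomp := card_connectedComponent_blockGraph_le r B
  have hcc := ccNum_le_card hB' hconn
  rw [cNum, ← hBcard]
  omega

theorem stmt_1 (n r : ℕ) (hr : 2 ≤ r + 1) (hn : r + 1 ≤ n) :
    ccNum n r ≤ 2 * cNum n r - 1 :=
  stmt_1_general n r hn
end

section
/- For all n ≥ r+1 ≥ 2, every connected (n,r+1,r)-covering has at least (binom(n,r) − 1)/r blocks; hence CC(n,r) ≥ (binom(n,r)−1)/r. -/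
open Finset

private lemma count_bound (n r : ℕ) (hr : 1 ≤ r) (B : Finset (Finset ℕ))
    (hcov : IsCovering n (r+1) r B) (hconn : IsConnectedFamily r B) :
    n.choose r ≤ r * B.card + 1 := by
  classical
  set G := SimpleGraph.fromRel
    (fun b c : B => r ≤ ((b : Finset ℕ) ∩ (c : Finset ℕ)).card) with hG
  have hconn' : G.Connected := hconn
  obtain ⟨b₀⟩ := hconn'.nonempty
  set P : B → Finset (Finset ℕ) := fun b => Finset.powersetCard r (b : Finset ℕ) with hP
  have hPcard : ∀ b : B, (P b).card = r + 1 := by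
    intro b
    rw [hP]
    simp only
    rw [Finset.card_powersetCard, (hcov.1 b b.2).2]
    rw [← Nat.choose_symm (Nat.le_succ r)]
    simp
  have key : ∀ b : B, ∃ (c : B) (s : Finset ℕ), b ≠ b₀ →
      (G.dist c b₀ < G.dist b b₀ ∧ s ∈ P b ∧ s ∈ P c) := by
    intro b
    by_cases hb : b = b₀
    · exact ⟨b₀, ∅, fun h => absurd hb h⟩
    have hd : G.dist b b₀ ≠ 0 :=
      fun h0 => hb (hconn'.dist_eq_zero_iff.mp h0)
    obtain ⟨w, hw⟩ := SimpleGraph.exists_walk_of_dist_ne_zero hd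
    have hnil : ¬ w.Nil := by
      rw [SimpleGraph.Walk.not_nil_iff_lt_length, hw]
      exact Nat.pos_of_ne_zero hd
    obtain ⟨c, hadj, q, rfl⟩ := SimpleGraph.Walk.not_nil_iff.mp hnil
    have hdist : G.dist c b₀ < G.dist b b₀ := by
      have h1 := SimpleGraph.dist_le q
      have h2 : q.length + 1 = G.dist b b₀ := by simpa using hw
      omega
    rw [hG, SimpleGraph.fromRel_adj] at hadj
    have hint : r ≤ ((b : Finset ℕ) ∩ (c : Finset ℕ)).card := by
      rcases hadj.2 with h | h
      · exact h
      · rwa [Finset.inter_comm]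
    obtain ⟨s, hs, hscard⟩ := Finset.exists_subset_card_eq hint
    refine ⟨c, s, fun _ => ⟨hdist, ?_, ?_⟩⟩
    · exact Finset.mem_powersetCard.mpr ⟨hs.trans Finset.inter_subset_left, hscard⟩
    · exact Finset.mem_powersetCard.mpr ⟨hs.trans Finset.inter_subset_right, hscard⟩
  choose cf sf hkey using key
  set V : Finset (Finset ℕ) :=
    P b₀ ∪ (Finset.univ.erase b₀).biUnion (fun b => (P b).erase (sf b)) with hV
  have claim : ∀ d (b : B), G.dist b b₀ ≤ d → P b ⊆ V := by
    intro d
    induction d with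
    | zero =>
      intro b hb
      have hb0 : b = b₀ := by
        rw [← hconn'.dist_eq_zero_iff]; omega
      subst hb0
      exact Finset.subset_union_left
    | succ d ih =>
      intro b hb s hs
      by_cases hbb : b = b₀
      · subst hbb; exact Finset.mem_union_left _ hs
      · obtain ⟨hlt, _, hPc⟩ := hkey b hbb
        by_cases hss : s = sf b
        · subst hss
          exact ih (cf b) (by omega) hPc
        · refine Finset.mem_union_right _ (Finset.mem_biUnion.mpr
            ⟨b, Finset.mem_erase.mpr ⟨hbb, Finset.mem_univ b⟩,
            Finset.mem_erase.mpr ⟨hss, hs⟩⟩)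
  have hsub : Finset.powersetCard r (Finset.Icc 1 n) ⊆ V := by
    intro s hs
    rw [Finset.mem_powersetCard] at hs
    obtain ⟨b, hbB, hsb⟩ := hcov.2 s hs.1 hs.2
    exact claim (G.dist ⟨b, hbB⟩ b₀) ⟨b, hbB⟩ le_rfl
      (Finset.mem_powersetCard.mpr ⟨hsb, hs.2⟩)
  have h1 : n.choose r ≤ V.card := by
    have h := Finset.card_le_card hsub
    rwa [Finset.card_powersetCard, Nat.card_Icc, Nat.add_sub_cancel] at h
  have h2 : V.card ≤ (r + 1) + (Finset.univ.erase b₀).card * r := by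
    refine le_trans (Finset.card_union_le _ _) ?_
    have h3 : ((Finset.univ.erase b₀).biUnion (fun b => (P b).erase (sf b))).card
        ≤ (Finset.univ.erase b₀).card * r := by
      refine le_trans (Finset.card_biUnion_le) ?_
      rw [Finset.card_eq_sum_ones (Finset.univ.erase b₀), Finset.sum_mul, one_mul]
      refine Finset.sum_le_sum ?_
      intro b hbmem
      have hbne : b ≠ b₀ := (Finset.mem_erase.mp hbmem).1
      obtain ⟨_, hPb, _⟩ := hkey b hbne
      rw [Finset.card_erase_of_mem hPb, hPcard b]
      omega
    rw [hPcard b₀] at *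
    omega
  have hcard : (Finset.univ.erase b₀).card = B.card - 1 := by
    rw [Finset.card_erase_of_mem (Finset.mem_univ b₀), Finset.card_univ, Fintype.card_coe]
  have hB1 : 1 ≤ B.card := Finset.card_pos.mpr ⟨b₀.1, b₀.2⟩
  rw [hcard] at h2
  obtain ⟨m, hm⟩ := Nat.exists_eq_add_of_le hB1
  calc n.choose r ≤ (r + 1) + (B.card - 1) * r := le_trans h1 h2
    _ = r * B.card + 1 := by rw [hm, Nat.add_sub_cancel_left]; ring

private lemma exists_connected_covering (n r : ℕ) (hn : r + 1 ≤ n) :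
    ∃ B : Finset (Finset ℕ), IsCovering n (r+1) r B ∧ IsConnectedFamily r B := by
  classical
  have hIcc : (Finset.Icc 1 n).card = n := by rw [Nat.card_Icc]; omega
  refine ⟨Finset.powersetCard (r+1) (Finset.Icc 1 n), ⟨?_, ?_⟩, ?_⟩
  · intro b hb
    exact Finset.mem_powersetCard.mp hb
  · intro s hsub hcard
    have hlt : s.card < (Finset.Icc 1 n).card := by omega
    have hne0 : ∃ x ∈ Finset.Icc 1 n, x ∉ s := by
      by_contra hcon
      push_neg at hcon
      have := Finset.card_le_card hcon
      omega
    obtain ⟨x, hxI, hxs⟩ := hne0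
    refine ⟨insert x s, Finset.mem_powersetCard.mpr
      ⟨Finset.insert_subset hxI hsub, ?_⟩, Finset.subset_insert _ _⟩
    rw [Finset.card_insert_of_notMem hxs, hcard]
  · set B := Finset.powersetCard (r+1) (Finset.Icc 1 n) with hB
    set G := SimpleGraph.fromRel
      (fun b c : B => r ≤ ((b : Finset ℕ) ∩ (c : Finset ℕ)).card) with hG
    have hmem : ∀ b : B, (b : Finset ℕ) ⊆ Finset.Icc 1 n ∧ (b : Finset ℕ).card = r + 1 :=
      fun b => Finset.mem_powersetCard.mp b.2
    have reach : ∀ k (b c : B), ((b : Finset ℕ) \ (c : Finset ℕ)).card ≤ k →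
        G.Reachable b c := by
      intro k
      induction k with
      | zero =>
        intro b c h
        have heq : (b : Finset ℕ) = c := by
          apply Finset.eq_of_subset_of_card_le
          · rw [← Finset.sdiff_eq_empty_iff_subset]
            exact Finset.card_eq_zero.mp (by omega)
          · rw [(hmem b).2, (hmem c).2]
        have : b = c := Subtype.ext heq
        subst this
        rfl
      | succ k ih =>
        intro b c h
        by_cases hbc : b = c
        · subst hbc; rfl
        have hbc' : (b : Finset ℕ) ≠ c := fun h' => hbc (Subtype.ext h')
        have hcards : (b : Finset ℕ).card = (c : Finset ℕ).card := by
          rw [(hmem b).2, (hmem c).2]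
        have h1 : ((b : Finset ℕ) \ (c : Finset ℕ)).Nonempty := by
          rw [Finset.sdiff_nonempty]
          intro hsub
          exact hbc' (Finset.eq_of_subset_of_card_le hsub (le_of_eq hcards.symm))
        have h2 : ((c : Finset ℕ) \ (b : Finset ℕ)).Nonempty := by
          rw [Finset.sdiff_nonempty]
          intro hsub
          exact hbc' (Finset.eq_of_subset_of_card_le hsub (le_of_eq hcards)).symm
        obtain ⟨x, hx⟩ := h1
        obtain ⟨y, hy⟩ := h2
        rw [Finset.mem_sdiff] at hx hy
        set b' : Finset ℕ := insert y ((b : Finset ℕ).erase x) with hb'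
        have hynotin : y ∉ (b : Finset ℕ).erase x :=
          fun h' => hy.2 (Finset.erase_subset _ _ h')
        have hb'card : b'.card = r + 1 := by
          rw [hb', Finset.card_insert_of_notMem hynotin,
            Finset.card_erase_of_mem hx.1, (hmem b).2]
          omega
        have hb'sub : b' ⊆ Finset.Icc 1 n :=
          Finset.insert_subset ((hmem c).1 hy.1)
            ((Finset.erase_subset _ _).trans (hmem b).1)
        have hb'B : b' ∈ B := Finset.mem_powersetCard.mpr ⟨hb'sub, hb'card⟩
        have hadj : G.Adj b ⟨b', hb'B⟩ := by
          rw [hG, SimpleGraph.fromRel_adj]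
          constructor
          · intro hE
            apply hy.2
            have : (b : Finset ℕ) = b' := congrArg Subtype.val hE
            rw [this, hb']
            exact Finset.mem_insert_self _ _
          · left
            have hss : (b : Finset ℕ).erase x ⊆ (b : Finset ℕ) ∩ b' :=
              Finset.subset_inter (Finset.erase_subset _ _)
                (hb' ▸ Finset.subset_insert _ _)
            have := Finset.card_le_card hss
            rw [Finset.card_erase_of_mem hx.1, (hmem b).2] at this
            simpa using this
        have hstep : (b' \ (c : Finset ℕ)).card ≤ k := by
          have hsub : b' \ (c : Finset ℕ) ⊆ ((b : Finset ℕ) \ (c : Finset ℕ)).erase x := by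
            intro z hz
            rw [Finset.mem_sdiff, hb', Finset.mem_insert] at hz
            obtain ⟨hz1 | hz1, hz2⟩ := hz
            · exact absurd (hz1 ▸ hy.1) hz2
            · rw [Finset.mem_erase] at hz1
              exact Finset.mem_erase.mpr ⟨hz1.1, Finset.mem_sdiff.mpr ⟨hz1.2, hz2⟩⟩
          have hle := Finset.card_le_card hsub
          have heq := Finset.card_erase_of_mem (Finset.mem_sdiff.mpr hx)
          omega
        exact (hadj.reachable).trans (ih ⟨b', hb'B⟩ c hstep)
    have hne : Nonempty B := by
      obtain ⟨t, htsub, htcard⟩ := Finset.exists_subset_card_eq (hIcc ▸ hn)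
      exact ⟨⟨t, Finset.mem_powersetCard.mpr ⟨htsub, htcard⟩⟩⟩
    haveI := hne
    exact SimpleGraph.Connected.mk (fun u v => reach _ u v le_rfl)

theorem stmt_2 (n r : ℕ) (hr : 2 ≤ r + 1) (hn : r + 1 ≤ n) :
    (∀ B : Finset (Finset ℕ), IsCovering n (r+1) r B → IsConnectedFamily r B →
      n.choose r - 1 ≤ r * B.card) ∧
    n.choose r - 1 ≤ r * ccNum n r := by
  have hr1 : 1 ≤ r := by omega
  have part1 : ∀ B : Finset (Finset ℕ), IsCovering n (r+1) r B → IsConnectedFamily r B →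
      n.choose r - 1 ≤ r * B.card := by
    intro B hcov hconn
    have := count_bound n r hr1 B hcov hconn
    omega
  refine ⟨part1, ?_⟩
  obtain ⟨B, h1, h2⟩ := exists_connected_covering n r hn
  have hSne : {m | ∃ B : Finset (Finset ℕ),
      IsCovering n (r+1) r B ∧ IsConnectedFamily r B ∧ B.card = m}.Nonempty :=
    ⟨B.card, B, h1, h2, rfl⟩
  obtain ⟨B', hB', hc', hcard⟩ := Nat.sInf_mem hSne
  rw [ccNum, ← hcard]
  exact part1 B' hB' hc'
end

section
/- For every n ≥ 2, CC(n,n-2) = n − 1. -/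
open Finset

lemma icc_card (n : ℕ) : (Finset.Icc 1 n).card = n := by
  simp [Nat.card_Icc]

lemma block_eq {n : ℕ} {b : Finset ℕ} (hn : 1 ≤ n) (hb : b ⊆ Finset.Icc 1 n)
    (hc : b.card = n - 1) : ∃ i ∈ Finset.Icc 1 n, b = Finset.Icc 1 n \ {i} := by
  have h1 : (Finset.Icc 1 n \ b).card = 1 := by
    rw [card_sdiff_of_subset hb, icc_card, hc]; omega
  obtain ⟨i, hi⟩ := Finset.card_eq_one.mp h1
  have hmem : i ∈ Finset.Icc 1 n \ b := hi ▸ mem_singleton_self i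
  rw [mem_sdiff] at hmem
  refine ⟨i, hmem.1, ?_⟩
  apply Finset.eq_of_subset_of_card_le
  · intro x hx
    rw [mem_sdiff, mem_singleton]
    exact ⟨hb hx, fun h => hmem.2 (h ▸ hx)⟩
  · rw [card_sdiff_of_subset (by simpa using hmem.1), icc_card, card_singleton, hc]

lemma comp_card {n i : ℕ} (hi : i ∈ Finset.Icc 1 n) :
    (Finset.Icc 1 n \ {i}).card = n - 1 := by
  rw [card_sdiff_of_subset (by simpa using hi), icc_card, card_singleton]

theorem stmt_4 (n : ℕ) (hn : 2 ≤ n) : ccNum n (n - 2) = n - 1 := by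
  have hr : n - 2 + 1 = n - 1 := by omega
  unfold ccNum
  rw [hr]
  set B : Finset (Finset ℕ) :=
    (Finset.Icc 1 (n-1)).image (fun i => Finset.Icc 1 n \ {i}) with hB
  have hinj : ∀ i ∈ Finset.Icc 1 n, ∀ j ∈ Finset.Icc 1 n,
      Finset.Icc 1 n \ {i} = Finset.Icc 1 n \ {j} → i = j := by
    intro i hi j hj h
    by_contra hne
    have : j ∈ Finset.Icc 1 n \ {i} := by
      rw [mem_sdiff, mem_singleton]; exact ⟨hj, fun hc => hne hc.symm⟩
    rw [h, mem_sdiff, mem_singleton] at this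
    exact this.2 rfl
  have hsub : Finset.Icc 1 (n-1) ⊆ Finset.Icc 1 n := by
    apply Finset.Icc_subset_Icc le_rfl; omega
  have hBcard : B.card = n - 1 := by
    rw [hB, Finset.card_image_of_injOn, icc_card]
    intro i hi j hj h
    exact hinj i (hsub hi) j (hsub hj) h
  have hmemB : ∀ b ∈ B, ∃ i ∈ Finset.Icc 1 (n-1), b = Finset.Icc 1 n \ {i} := by
    intro b hb
    rw [hB, mem_image] at hb
    obtain ⟨i, hi, h⟩ := hb
    exact ⟨i, hi, h.symm⟩
  have hcov : IsCovering n (n-1) (n-2) B := by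
    constructor
    · intro b hb
      obtain ⟨i, hi, rfl⟩ := hmemB b hb
      exact ⟨sdiff_subset, comp_card (hsub hi)⟩
    · intro s hs hcard
      have hc2 : (Finset.Icc 1 n \ s).card = 2 := by
        rw [card_sdiff_of_subset hs, icc_card, hcard]; omega
      have : ∃ a ∈ Finset.Icc 1 n \ s, a ≠ n := by
        by_contra hcon
        push_neg at hcon
        have : Finset.Icc 1 n \ s ⊆ {n} := by
          intro a ha; rw [mem_singleton]; exact hcon a ha
        have := Finset.card_le_card this
        rw [hc2, card_singleton] at this; omega
      obtain ⟨a, ha, hane⟩ := this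
      rw [mem_sdiff] at ha
      have ha' : a ∈ Finset.Icc 1 (n-1) := by
        rw [Finset.mem_Icc] at ha ⊢
        omega
      refine ⟨Finset.Icc 1 n \ {a}, ?_, ?_⟩
      · rw [hB, mem_image]; exact ⟨a, ha', rfl⟩
      · intro x hx
        rw [mem_sdiff, mem_singleton]
        exact ⟨hs hx, fun h => ha.2 (h ▸ hx)⟩
  have hconn : IsConnectedFamily (n-2) B := by
    rw [IsConnectedFamily, SimpleGraph.connected_iff]
    constructor
    · intro x y
      by_cases hxy : x = y
      · exact hxy ▸ SimpleGraph.Reachable.refl x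
      · apply SimpleGraph.Adj.reachable
        rw [SimpleGraph.fromRel_adj]
        refine ⟨hxy, Or.inl ?_⟩
        obtain ⟨hx1, hx2⟩ := hcov.1 x x.2
        obtain ⟨hy1, hy2⟩ := hcov.1 y y.2
        have hu : ((x : Finset ℕ) ∪ (y : Finset ℕ)).card ≤ n := by
          have := Finset.card_le_card (Finset.union_subset hx1 hy1)
          rwa [icc_card] at this
        have := Finset.card_inter_add_card_union (x : Finset ℕ) (y : Finset ℕ)
        omega
    · rw [Finset.nonempty_coe_sort, hB]
      refine ⟨Finset.Icc 1 n \ {1}, ?_⟩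
      rw [mem_image]
      exact ⟨1, by rw [Finset.mem_Icc]; omega, rfl⟩
  apply le_antisymm
  · exact Nat.sInf_le ⟨B, hcov, hconn, hBcard⟩
  · refine le_csInf ⟨n - 1, B, hcov, hconn, hBcard⟩ ?_
    rintro m ⟨C, hCcov, -, rfl⟩
    set S : Finset ℕ := (Finset.Icc 1 n).filter (fun i => Finset.Icc 1 n \ {i} ∈ C)
      with hS
    have hSsub : S ⊆ Finset.Icc 1 n := filter_subset _ _
    have h1 : S.card ≤ C.card := by
      have himg : S.image (fun i => Finset.Icc 1 n \ {i}) ⊆ C := by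
        intro c hc
        rw [mem_image] at hc
        obtain ⟨i, hi, rfl⟩ := hc
        exact (Finset.mem_filter.mp hi).2
      calc S.card = (S.image (fun i => Finset.Icc 1 n \ {i})).card := by
            rw [Finset.card_image_of_injOn]
            intro i hi j hj h
            exact hinj i (hSsub hi) j (hSsub hj) h
        _ ≤ C.card := Finset.card_le_card himg
    have h2 : (Finset.Icc 1 n \ S).card ≤ 1 := by
      rw [Finset.card_le_one]
      intro a ha b hb
      by_contra hab
      rw [mem_sdiff] at ha hb
      have hpair : ({a, b} : Finset ℕ) ⊆ Finset.Icc 1 n := by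
        intro x hx
        rw [mem_insert, mem_singleton] at hx
        rcases hx with rfl | rfl
        · exact ha.1
        · exact hb.1
      have hpc : ({a, b} : Finset ℕ).card = 2 := by
        rw [Finset.card_insert_of_notMem (by simpa using hab), card_singleton]
      have hscard : (Finset.Icc 1 n \ {a, b}).card = n - 2 := by
        rw [card_sdiff_of_subset hpair, icc_card, hpc]
      obtain ⟨c, hcC, hsc⟩ := hCcov.2 _ sdiff_subset hscard
      obtain ⟨hc1, hc2⟩ := hCcov.1 c hcC
      obtain ⟨i, hi, rfl⟩ := block_eq (by omega) hc1 hc2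
      have hiab : i ∈ ({a, b} : Finset ℕ) := by
        by_contra hcon
        have : i ∈ Finset.Icc 1 n \ ({a, b} : Finset ℕ) := by
          rw [mem_sdiff]; exact ⟨hi, hcon⟩
        have := hsc this
        rw [mem_sdiff, mem_singleton] at this
        exact this.2 rfl
      have hiS : i ∈ S := by
        rw [hS, Finset.mem_filter]
        exact ⟨hi, hcC⟩
      rw [mem_insert, mem_singleton] at hiab
      rcases hiab with rfl | rfl
      · exact ha.2 hiS
      · exact hb.2 hiS
    have h3 : (Finset.Icc 1 n \ S).card = n - S.card := by
      rw [card_sdiff_of_subset hSsub, icc_card]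
    have h4 : S.card ≤ n := by
      have := Finset.card_le_card hSsub
      rwa [icc_card] at this
    omega
end

section
/- For every n ≥ 3, CC(n,2) = ⌈(binom(n,2) − 1)/2⌉. -/
open Finset

/-!
In a connected family of `(r+1)`-sets, adding the blocks one at a time so that each new block
meets an earlier one in `r` points, every block after the first brings at most `r` new
`r`-subsets; hence a connected `(n, r+1, r)`-covering with `m` blocks has `C(n, r) ≤ r m + 1`.
For `r = 2` this bound is attained by induction on `n`: a new vertex `v` is joined to
`[1, p]` by the triangles `{2i - 1, 2i, v}`, each hanging on an already covered pair, and when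
`n ≡ 2 (mod 4)` three new vertices are joined at once so that every triangle brings exactly two
new pairs.
-/

namespace SimpleGraph

variable {V α : Type*} [Fintype V] [DecidableEq α] {G : SimpleGraph V}

theorem Connected.card_biUnion_le (hG : G.Connected) (f : V → Finset α) {k : ℕ}
    (hf : ∀ v, #(f v) ≤ k + 1) (hadj : ∀ u v, G.Adj u v → (f u ∩ f v).Nonempty) :
    #(univ.biUnion f) ≤ k * Fintype.card V + 1 := by
  classical
  have grow : ∀ m, 1 ≤ m → m ≤ Fintype.card V →
      ∃ S : Finset V, #S = m ∧ #(S.biUnion f) ≤ k * m + 1 := by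
    intro m hm
    induction m, hm using Nat.le_induction with
    | base =>
      intro _
      obtain ⟨v⟩ := hG.nonempty
      exact ⟨{v}, card_singleton v, by simpa using hf v⟩
    | succ m hm ih =>
      intro hmV
      obtain ⟨S, rfl, hS⟩ := ih (by omega)
      obtain ⟨u, hu⟩ := card_pos.1 (by omega : 0 < #S)
      obtain ⟨w, -, hw⟩ := exists_of_ssubset <| ssubset_univ_iff.2 fun h : S = univ => by
        simp [h] at hmV
      obtain ⟨d, -, hdS, hdS'⟩ := (hG.preconnected u w).some.exists_boundary_dart (↑S) hu hw
      have hmeet : 1 ≤ #(f d.snd ∩ S.biUnion f) := by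
        obtain ⟨x, hx⟩ := hadj _ _ d.adj
        rw [mem_inter] at hx
        exact card_pos.2 ⟨x, mem_inter.2 ⟨hx.2, mem_biUnion.2 ⟨d.fst, hdS, hx.1⟩⟩⟩
      refine ⟨insert d.snd S, card_insert_of_notMem hdS', ?_⟩
      have := card_union_add_card_inter (f d.snd) (S.biUnion f)
      rw [biUnion_insert]
      have := hf d.snd
      rw [Nat.mul_succ]
      omega
  have := hG.nonempty
  obtain ⟨S, hS, hbound⟩ := grow _ Fintype.card_pos le_rfl
  rwa [eq_univ_of_card S hS] at hbound

end SimpleGraph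

theorem IsCovering.choose_le_mul_card_add_one {n r : ℕ} {B : Finset (Finset ℕ)}
    (hB : IsCovering n (r + 1) r B) (hconn : IsConnectedFamily r B) :
    n.choose r ≤ r * #B + 1 := by
  have hbound := SimpleGraph.Connected.card_biUnion_le hconn
    (fun b : B => powersetCard r (b : Finset ℕ)) (k := r)
    (fun b => by simp [card_powersetCard, (hB.1 b b.2).2])
    (fun b c hbc => by
      obtain ⟨t, hts, htc⟩ := exists_subset_card_eq <| by
        rcases (SimpleGraph.fromRel_adj _ _ _).1 hbc with ⟨-, h | h⟩
        · exact h
        · rwa [inter_comm] at h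
      exact ⟨t, mem_inter.2 ⟨mem_powersetCard.2 ⟨hts.trans inter_subset_left, htc⟩,
        mem_powersetCard.2 ⟨hts.trans inter_subset_right, htc⟩⟩⟩)
  have hcover :
      powersetCard r (Icc 1 n) ⊆ univ.biUnion fun b : B => powersetCard r (b : Finset ℕ) := by
    intro s hs
    obtain ⟨hsn, hsr⟩ := mem_powersetCard.1 hs
    obtain ⟨b, hb, hsb⟩ := hB.2 s hsn hsr
    exact mem_biUnion.2 ⟨⟨b, hb⟩, mem_univ _, mem_powersetCard.2 ⟨hsb, hsr⟩⟩
  calc n.choose r = #(powersetCard r (Icc 1 n)) := by simp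
    _ ≤ _ := card_le_card hcover
    _ ≤ r * #B + 1 := by simpa using hbound

theorem isCovering_two_iff {n k : ℕ} {B : Finset (Finset ℕ)} :
    IsCovering n k 2 B ↔ (∀ b ∈ B, b ⊆ Icc 1 n ∧ #b = k) ∧
      ∀ x y, 1 ≤ x → x < y → y ≤ n → ∃ b ∈ B, x ∈ b ∧ y ∈ b := by
  refine and_congr_right fun _ => ⟨fun h x y hx hxy hy => ?_, fun h s hs hs2 => ?_⟩
  · obtain ⟨b, hb, hxyb⟩ := h {x, y} (by simp [insert_subset_iff]; omega) (card_pair hxy.ne)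
    exact ⟨b, hb, hxyb (by simp), hxyb (by simp)⟩
  · obtain ⟨x, y, hxy, rfl⟩ := card_eq_two.1 hs2
    simp only [insert_subset_iff, singleton_subset_iff, mem_Icc] at hs ⊢
    rcases hxy.lt_or_gt with hlt | hlt
    · obtain ⟨b, hb, hxb, hyb⟩ := h x y (by omega) hlt (by omega)
      exact ⟨b, hb, hxb, hyb⟩
    · obtain ⟨b, hb, hyb, hxb⟩ := h y x (by omega) hlt (by omega)
      exact ⟨b, hb, hxb, hyb⟩

theorem IsCovering.union {p n k : ℕ} {B D : Finset (Finset ℕ)} (hB : IsCovering p k 2 B)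
    (hpn : p ≤ n) (hD : ∀ d ∈ D, d ⊆ Icc 1 n ∧ #d = k)
    (hDcov : ∀ x y, 1 ≤ x → x < y → p < y → y ≤ n → ∃ d ∈ D, x ∈ d ∧ y ∈ d) :
    IsCovering n k 2 (B ∪ D) := by
  rw [isCovering_two_iff] at hB ⊢
  refine ⟨fun b hb => ?_, fun x y hx hxy hy => ?_⟩
  · rcases mem_union.1 hb with hb | hb
    · exact ⟨(hB.1 b hb).1.trans (Icc_subset_Icc_right hpn), (hB.1 b hb).2⟩
    · exact hD b hb
  · by_cases hyp : y ≤ p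
    · obtain ⟨b, hb, hxy⟩ := hB.2 x y hx hxy hyp
      exact ⟨b, mem_union_left _ hb, hxy⟩
    · obtain ⟨d, hd, hxy⟩ := hDcov x y hx hxy (by omega) hy
      exact ⟨d, mem_union_right _ hd, hxy⟩

theorem IsCovering.exists_two_le_card_inter {p k : ℕ} {B : Finset (Finset ℕ)}
    (hB : IsCovering p k 2 B) {x y : ℕ} (hx : 1 ≤ x) (hxy : x < y) (hy : y ≤ p)
    {d : Finset ℕ} (hxd : x ∈ d) (hyd : y ∈ d) : ∃ c ∈ B, 2 ≤ #(d ∩ c) := by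
  obtain ⟨c, hc, hxc, hyc⟩ := (isCovering_two_iff.1 hB).2 x y hx hxy hy
  exact ⟨c, hc, one_lt_card.2 ⟨x, mem_inter.2 ⟨hxd, hxc⟩, y, mem_inter.2 ⟨hyd, hyc⟩, hxy.ne⟩⟩

theorem IsConnectedFamily.insert_of_le_card_inter {r : ℕ} {B : Finset (Finset ℕ)}
    (hB : IsConnectedFamily r B) {b c : Finset ℕ} (hc : c ∈ B) (hbc : r ≤ #(b ∩ c)) :
    IsConnectedFamily r (insert b B) := by
  by_cases hb : b ∈ B
  · rwa [insert_eq_of_mem hb]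
  let ι : (SimpleGraph.fromRel fun x y : B => r ≤ #((x : Finset ℕ) ∩ y)) →g
      SimpleGraph.fromRel fun x y : (insert b B : Finset (Finset ℕ)) =>
        r ≤ #((x : Finset ℕ) ∩ y) :=
    { toFun := fun x => ⟨x, mem_insert_of_mem x.2⟩
      map_rel' := fun {x y} hxy => by
        simp only [SimpleGraph.fromRel_adj, ne_eq, Subtype.ext_iff] at hxy ⊢
        exact hxy }
  have hreach : ∀ x, (SimpleGraph.fromRel fun x y : (insert b B : Finset (Finset ℕ)) =>
      r ≤ #((x : Finset ℕ) ∩ y)).Reachable x ⟨c, mem_insert_of_mem hc⟩ := by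
    rintro ⟨x, hx⟩
    rcases mem_insert.1 hx with rfl | hx
    · refine SimpleGraph.Adj.reachable ((SimpleGraph.fromRel_adj _ _ _).2 ⟨?_, Or.inl hbc⟩)
      rintro ⟨⟩
      exact hb hc
    · exact (hB.preconnected ⟨x, hx⟩ ⟨c, hc⟩).map ι
  have : Nonempty (insert b B : Finset (Finset ℕ)) := ⟨⟨b, mem_insert_self b B⟩⟩
  exact ⟨fun x y => (hreach x).trans (hreach y).symm⟩

theorem IsConnectedFamily.union {r : ℕ} {B D : Finset (Finset ℕ)} (hB : IsConnectedFamily r B)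
    (hD : ∀ d ∈ D, ∃ c ∈ B, r ≤ #(d ∩ c)) : IsConnectedFamily r (B ∪ D) := by
  induction D using Finset.induction_on with
  | empty => simpa using hB
  | insert d D _ ih =>
    obtain ⟨c, hc, hdc⟩ := hD d (mem_insert_self d D)
    rw [union_insert]
    exact (ih fun e he => hD e (mem_insert_of_mem he)).insert_of_le_card_inter
      (mem_union_left D hc) hdc

theorem IsConnectedFamily.insert_of_pair_mem {B : Finset (Finset ℕ)} (hB : IsConnectedFamily 2 B)
    {b c : Finset ℕ} (hc : c ∈ B) {x y : ℕ} (hxy : x ≠ y) (hx : x ∈ b ∩ c) (hy : y ∈ b ∩ c) :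
    IsConnectedFamily 2 (insert b B) :=
  hB.insert_of_le_card_inter hc (one_lt_card.2 ⟨x, hx, y, hy, hxy⟩)

theorem isConnectedFamily_singleton (r : ℕ) (b : Finset ℕ) : IsConnectedFamily r {b} :=
  ⟨SimpleGraph.Preconnected.of_subsingleton⟩

def fan (a m v : ℕ) : Finset (Finset ℕ) :=
  (range m).image fun i => {a + 2 * i, a + 2 * i + 1, v}

theorem mem_fan {a m v : ℕ} {b : Finset ℕ} :
    b ∈ fan a m v ↔ ∃ i < m, {a + 2 * i, a + 2 * i + 1, v} = b := by
  simp [fan]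

theorem card_fan_le (a m v : ℕ) : #(fan a m v) ≤ m :=
  card_image_le.trans (card_range m).le

theorem exists_mem_fan {a m v x : ℕ} (hax : a ≤ x) (hx : x < a + 2 * m) :
    ∃ b ∈ fan a m v, x ∈ b ∧ v ∈ b :=
  ⟨_, mem_fan.2 ⟨(x - a) / 2, by omega, rfl⟩, by simp; omega, by simp⟩

theorem triple_subset_Icc_and_card {n a b c : ℕ} (ha : 1 ≤ a) (hab : a < b) (hbc : b < c)
    (hc : c ≤ n) : {a, b, c} ⊆ Icc 1 n ∧ #{a, b, c} = 3 :=
  ⟨by simp [insert_subset_iff]; omega,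
    card_eq_three.2 ⟨a, b, c, by omega, by omega, by omega, rfl⟩⟩

theorem fan_subset_Icc_and_card {n a m v : ℕ} (ha : 1 ≤ a) (hav : a + 2 * m ≤ v) (hv : v ≤ n) :
    ∀ b ∈ fan a m v, b ⊆ Icc 1 n ∧ #b = 3 := by
  intro b hb
  obtain ⟨i, hi, rfl⟩ := mem_fan.1 hb
  exact triple_subset_Icc_and_card (by omega) (by omega) (by omega) hv

theorem IsCovering.exists_two_le_card_inter_of_mem_fan {p k a m v : ℕ} {B : Finset (Finset ℕ)}
    (hB : IsCovering p k 2 B) (ha : 1 ≤ a) (hap : a + 2 * m ≤ p + 1) :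
    ∀ d ∈ fan a m v, ∃ c ∈ B, 2 ≤ #(d ∩ c) := by
  intro d hd
  obtain ⟨i, hi, rfl⟩ := mem_fan.1 hd
  exact hB.exists_two_le_card_inter (x := a + 2 * i) (y := a + 2 * i + 1) (by omega) (by omega)
    (by omega) (by simp) (by simp)

/-- The second fan is the single triangle `{p - 1, p, p + 1}` when `p` is odd, and empty
otherwise. -/
def extensionByOne (p : ℕ) : Finset (Finset ℕ) :=
  fan 1 (p / 2) (p + 1) ∪ fan (p - 1) (p % 2) (p + 1)

theorem card_extensionByOne_le (p : ℕ) : #(extensionByOne p) ≤ (p + 1) / 2 := by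
  grw [extensionByOne, card_union_le, card_fan_le, card_fan_le]
  omega

theorem IsCovering.union_extensionByOne {p : ℕ} (hp : 2 ≤ p) {B : Finset (Finset ℕ)}
    (hB : IsCovering p 3 2 B) : IsCovering (p + 1) 3 2 (B ∪ extensionByOne p) := by
  refine hB.union (by omega) (fun d hd => ?_) fun x y hx hxy hpy hy => ?_
  · rcases mem_union.1 hd with hd | hd
    · exact fan_subset_Icc_and_card le_rfl (by omega) le_rfl d hd
    · exact fan_subset_Icc_and_card (by omega) (by omega) le_rfl d hd
  · obtain rfl : y = p + 1 := by omega
    by_cases hxp : x < 1 + 2 * (p / 2)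
    · obtain ⟨d, hd, hxd⟩ := exists_mem_fan (v := p + 1) hx hxp
      exact ⟨d, mem_union_left _ hd, hxd⟩
    · obtain ⟨d, hd, hxd⟩ := exists_mem_fan (a := p - 1) (m := p % 2) (v := p + 1) (x := x)
        (by omega) (by omega)
      exact ⟨d, mem_union_right _ hd, hxd⟩

theorem IsConnectedFamily.union_extensionByOne {p : ℕ} (hp : 2 ≤ p) {B : Finset (Finset ℕ)}
    (hB : IsCovering p 3 2 B) (hconn : IsConnectedFamily 2 B) :
    IsConnectedFamily 2 (B ∪ extensionByOne p) := by
  refine hconn.union fun d hd => ?_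
  rcases mem_union.1 hd with hd | hd
  · exact hB.exists_two_le_card_inter_of_mem_fan le_rfl (by omega) d hd
  · exact hB.exists_two_le_card_inter_of_mem_fan (by omega) (by omega) d hd

def extensionByThree (p : ℕ) : Finset (Finset ℕ) :=
  insert {1, p + 2, p + 3} <| insert {p + 1, p + 2, p + 3} <| insert {p, p + 1, p + 2} <|
    insert {p - 1, p, p + 2} <|
      fan 1 (p / 2) (p + 1) ∪ fan 2 (p / 2 - 1) (p + 2) ∪ fan 2 (p / 2) (p + 3)

theorem card_extensionByThree_le {p : ℕ} (hp : 2 ≤ p) :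
    #(extensionByThree p) ≤ 3 * (p / 2) + 3 := by
  grw [extensionByThree, card_insert_le, card_insert_le, card_insert_le, card_insert_le,
    card_union_le, card_union_le, card_fan_le, card_fan_le, card_fan_le]
  omega

theorem IsCovering.union_extensionByThree {p : ℕ} (hp : 2 ≤ p) {B : Finset (Finset ℕ)}
    (hB : IsCovering p 3 2 B) : IsCovering (p + 3) 3 2 (B ∪ extensionByThree p) := by
  refine hB.union (by omega) (fun d hd => ?_) fun x y hx hxy hpy hy => ?_
  · simp only [extensionByThree, mem_insert, mem_union] at hd
    rcases hd with rfl | rfl | rfl | rfl | (hd | hd) | hd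
    · exact triple_subset_Icc_and_card le_rfl (by omega) (by omega) le_rfl
    · exact triple_subset_Icc_and_card (by omega) (by omega) (by omega) le_rfl
    · exact triple_subset_Icc_and_card (by omega) (by omega) (by omega) (by omega)
    · exact triple_subset_Icc_and_card (by omega) (by omega) (by omega) (by omega)
    · exact fan_subset_Icc_and_card le_rfl (by omega) (by omega) d hd
    · exact fan_subset_Icc_and_card (by omega) (by omega) (by omega) d hd
    · exact fan_subset_Icc_and_card (by omega) (by omega) le_rfl d hd
  have hfan : ∀ {a m v}, (∀ d ∈ fan a m v, d ∈ extensionByThree p) → a ≤ x → x < a + 2 * m →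
      y = v → ∃ d ∈ extensionByThree p, x ∈ d ∧ y ∈ d := by
    rintro a m v hsub hax hx rfl
    obtain ⟨d, hd, hxd⟩ := exists_mem_fan (v := y) hax hx
    exact ⟨d, hsub d hd, hxd⟩
  rcases (by omega : y = p + 1 ∨ y = p + 2 ∨ y = p + 3) with rfl | rfl | rfl
  · by_cases hx' : x < 1 + 2 * (p / 2)
    · exact hfan (fun d hd => by simp [extensionByThree, hd]) hx hx' rfl
    · exact ⟨{p, p + 1, p + 2}, by simp [extensionByThree], by simp; omega, by simp⟩
  · rcases (by omega : x = 1 ∨ 2 ≤ x ∧ x < 2 + 2 * (p / 2 - 1) ∨ p - 1 ≤ x ∧ x ≤ p ∨ x = p + 1)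
      with rfl | hx' | hx' | rfl
    · exact ⟨{1, p + 2, p + 3}, by simp [extensionByThree], by simp, by simp⟩
    · exact hfan (fun d hd => by simp [extensionByThree, hd]) hx'.1 hx'.2 rfl
    · exact ⟨{p - 1, p, p + 2}, by simp [extensionByThree], by simp; omega, by simp⟩
    · exact ⟨{p, p + 1, p + 2}, by simp [extensionByThree], by simp, by simp⟩
  · rcases (by omega : x = 1 ∨ 2 ≤ x ∧ x < 2 + 2 * (p / 2) ∨ p + 1 ≤ x)
      with rfl | hx' | hx'
    · exact ⟨{1, p + 2, p + 3}, by simp [extensionByThree], by simp, by simp⟩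
    · exact hfan (fun d hd => by simp [extensionByThree, hd]) hx'.1 hx'.2 rfl
    · exact ⟨{p + 1, p + 2, p + 3}, by simp [extensionByThree], by simp; omega, by simp⟩

theorem IsConnectedFamily.union_extensionByThree {p : ℕ} (hp : 2 ≤ p) (hodd : p % 2 = 1)
    {B : Finset (Finset ℕ)} (hB : IsCovering p 3 2 B) (hconn : IsConnectedFamily 2 B) :
    IsConnectedFamily 2 (B ∪ extensionByThree p) := by
  simp only [extensionByThree, union_insert]
  have hfans := hconn.union (D := fan 1 (p / 2) (p + 1) ∪ fan 2 (p / 2 - 1) (p + 2) ∪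
      fan 2 (p / 2) (p + 3)) fun d hd => by
    rcases mem_union.1 hd with hd | hd
    · rcases mem_union.1 hd with hd | hd
      · exact hB.exists_two_le_card_inter_of_mem_fan le_rfl (by omega) d hd
      · exact hB.exists_two_le_card_inter_of_mem_fan (by omega) (by omega) d hd
    · exact hB.exists_two_le_card_inter_of_mem_fan (by omega) (by omega) d hd
  obtain ⟨c, hc, hcd⟩ := hB.exists_two_le_card_inter (x := p - 1) (y := p)
    (d := {p - 1, p, p + 2}) (by omega) (by omega) le_rfl (by simp) (by simp)
  have h₁ := hfans.insert_of_le_card_inter (b := {p - 1, p, p + 2}) (mem_union_left _ hc) hcd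
  have h₂ := h₁.insert_of_pair_mem (b := {p, p + 1, p + 2}) (mem_insert_self _ _)
    (x := p) (y := p + 2) (by omega) (by simp) (by simp)
  have h₃ := h₂.insert_of_pair_mem (b := {p + 1, p + 2, p + 3}) (mem_insert_self _ _)
    (x := p + 1) (y := p + 2) (by omega) (by simp) (by simp)
  exact h₃.insert_of_pair_mem (b := {1, p + 2, p + 3}) (mem_insert_self _ _)
    (x := p + 2) (y := p + 3) (by omega) (by simp) (by simp)

theorem choose_two_succ (n : ℕ) : (n + 1).choose 2 = n.choose 2 + n := by
  rw [Nat.choose_succ_succ', Nat.choose_one_right, add_comm]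

theorem choose_two_mod_two (n : ℕ) : n.choose 2 % 2 = n / 2 % 2 := by
  induction n with
  | zero => rfl
  | succ n ih =>
    rw [choose_two_succ]
    obtain ⟨k, rfl | rfl⟩ := Nat.even_or_odd' n <;> omega

theorem choose_two_div_two_add_le_succ {p : ℕ} (hp : p % 4 ≠ 1) :
    p.choose 2 / 2 + (p + 1) / 2 ≤ (p + 1).choose 2 / 2 := by
  have := choose_two_mod_two p
  rw [choose_two_succ]
  omega

theorem choose_two_div_two_add_le_add_three {p : ℕ} (hp : p % 4 = 3) :
    p.choose 2 / 2 + (3 * (p / 2) + 3) ≤ (p + 3).choose 2 / 2 := by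
  have := choose_two_mod_two p
  rw [choose_two_succ, choose_two_succ, choose_two_succ]
  omega

/-- For odd `p`, adjoining the vertex `p + 1` takes `(p + 1) / 2` triangles for `p` new pairs; the
bound leaves room for this unless `p + 1 ≡ 2 (mod 4)`, and there three vertices are adjoined at
once. -/
def triangleCovering : ℕ → Finset (Finset ℕ)
  | 3 => {{1, 2, 3}}
  | n + 4 =>
    if n % 4 = 2 then triangleCovering (n + 1) ∪ extensionByThree (n + 1)
    else triangleCovering (n + 3) ∪ extensionByOne (n + 3)
  | _ => ∅

theorem triangleCovering_spec (n : ℕ) (hn : 3 ≤ n) :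
    IsCovering n 3 2 (triangleCovering n) ∧ IsConnectedFamily 2 (triangleCovering n) ∧
      #(triangleCovering n) ≤ n.choose 2 / 2 := by
  induction n using Nat.strong_induction_on with
  | _ n ih =>
  match n, hn with
  | 3, _ =>
    rw [triangleCovering]
    refine ⟨isCovering_two_iff.2 ⟨?_, ?_⟩, isConnectedFamily_singleton 2 _, by decide⟩
    · simp [insert_subset_iff]
    · intro x y hx hxy hy
      exact ⟨{1, 2, 3}, mem_singleton_self _, by simp; omega, by simp; omega⟩
  | n + 4, _ =>
    rw [triangleCovering]
    split_ifs with h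
    · obtain ⟨hB, hconn, hcard⟩ := ih (n + 1) (by omega) (by omega)
      refine ⟨hB.union_extensionByThree (by omega), hconn.union_extensionByThree (by omega)
        (by omega) hB, ?_⟩
      grw [card_union_le, hcard, card_extensionByThree_le (by omega)]
      exact choose_two_div_two_add_le_add_three (by omega)
    · obtain ⟨hB, hconn, hcard⟩ := ih (n + 3) (by omega) (by omega)
      refine ⟨hB.union_extensionByOne (by omega), hconn.union_extensionByOne (by omega) hB, ?_⟩
      grw [card_union_le, hcard, card_extensionByOne_le]
      exact choose_two_div_two_add_le_succ (by omega)

theorem stmt_7 (n : ℕ) (hn : 3 ≤ n) :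
    ccNum n 2 = ((n.choose 2 - 1) + 1) / 2 := by
  rw [Nat.sub_add_cancel (Nat.choose_pos (by omega)), ccNum]
  obtain ⟨hB, hconn, hcard⟩ := triangleCovering_spec n hn
  have hmem : #(triangleCovering n) ∈ {m | ∃ B : Finset (Finset ℕ),
      IsCovering n (2 + 1) 2 B ∧ IsConnectedFamily 2 B ∧ #B = m} := ⟨_, hB, hconn, rfl⟩
  refine le_antisymm ((Nat.sInf_le hmem).trans hcard) (le_csInf ⟨_, hmem⟩ ?_)
  rintro _ ⟨B, hB, hconn, rfl⟩
  have := hB.choose_le_mul_card_add_one hconn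
  omega
end

section
/- For every n ≥ 3, the minimum number of edges of a connected graph on n vertices with independence number at most 2 is binom(⌈n/2⌉,2) + binom(⌊n/2⌋,2) + 1. -/
/-!
If every three vertices of `G` span an edge, then `Gᶜ` is triangle-free, so by Turán's theorem
`Gᶜ` has at most as many edges as the Turán graph `T(n, 2)`, with equality only if `Gᶜ ≅ T(n, 2)`.
In that case `G` is isomorphic to `T(n, 2)ᶜ`, the disjoint union of the cliques on the even and
on the odd vertices, which is disconnected. Hence a connected `G` has more edges than `T(n, 2)ᶜ`,
and `T(n, 2)ᶜ` plus one edge joining its two cliques attains the bound.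
-/

/-- A graph on {1,…,n} has independence number at most 2 if every 3-element
vertex subset contains an edge. -/
def IndepAtMostTwo {n : ℕ} (G : SimpleGraph (Fin n)) : Prop :=
  ∀ s : Finset (Fin n), s.card = 3 → ∃ u ∈ s, ∃ v ∈ s, G.Adj u v

open Finset Fintype SimpleGraph

namespace SimpleGraph

variable {V : Type*}

theorem card_edgeFinset_add_card_edgeFinset_compl [Fintype V] [DecidableEq V]
    (G : SimpleGraph V) [DecidableRel G.Adj] :
    #G.edgeFinset + #Gᶜ.edgeFinset = (card V).choose 2 := by
  rw [← card_union_of_disjoint (disjoint_edgeFinset.2 disjoint_compl_right), ← edgeFinset_sup]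
  convert card_edgeFinset_top_eq_card_choose_two (V := V)
  exact sup_compl_eq_top

def Iso.compl {W : Type*} {G : SimpleGraph V} {H : SimpleGraph W} (f : G ≃g H) : Gᶜ ≃g Hᶜ where
  toEquiv := f.toEquiv
  map_rel_iff' {a b} := by
    simp only [compl_adj, ne_eq, f.toEquiv.apply_eq_iff_eq]
    exact and_congr_right' (not_congr f.map_adj_iff)

theorem connected_sup_edge_of_reachable {G : SimpleGraph V} {a b : V}
    (h : ∀ v, G.Reachable a v ∨ G.Reachable b v) : (G ⊔ edge a b).Connected := by
  have hab : (G ⊔ edge a b).Reachable a b := by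
    obtain rfl | hne := eq_or_ne a b
    · rfl
    · exact Adj.reachable (Or.inr ((edge_adj a b a b).2 ⟨Or.inl ⟨rfl, rfl⟩, hne⟩))
  refine (connected_iff_exists_forall_reachable _).2 ⟨a, fun v => ?_⟩
  rcases h v with hv | hv
  · exact hv.mono le_sup_left
  · exact hab.trans (hv.mono le_sup_left)

theorem reachable_compl_turanGraph_iff {n r : ℕ} {u v : Fin n} :
    (turanGraph n r)ᶜ.Reachable u v ↔ (u : ℕ) % r = v % r := by
  constructor
  · rintro ⟨p⟩
    induction p with
    | nil => rfl
    | cons h _ ih => exact (not_ne_iff.1 h.2).trans ih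
  · intro h
    obtain rfl | hne := eq_or_ne u v
    · rfl
    · exact Adj.reachable ⟨hne, not_ne_iff.2 h⟩

theorem not_connected_compl_turanGraph {n r : ℕ} (hn : 2 ≤ n) (hr : 2 ≤ r) :
    ¬ (turanGraph n r)ᶜ.Connected := fun h => by
  have := reachable_compl_turanGraph_iff.1 (h.preconnected ⟨0, by omega⟩ ⟨1, by omega⟩)
  simp [Nat.mod_eq_of_lt (show 1 < r by omega)] at this

theorem card_edgeFinset_compl_turanGraph_lt_of_connected [Fintype V] [DecidableEq V]
    {G : SimpleGraph V} [DecidableRel G.Adj] {r : ℕ} (hr : 2 ≤ r) (hV : 2 ≤ card V)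
    (hG : G.Connected) (hGc : Gᶜ.CliqueFree (r + 1)) :
    #(turanGraph (card V) r)ᶜ.edgeFinset < #G.edgeFinset := by
  have hT := (turanGraph (card V) r).card_edgeFinset_add_card_edgeFinset_compl
  have hGT := G.card_edgeFinset_add_card_edgeFinset_compl
  rw [Fintype.card_fin] at hT
  have turan_bound {H : SimpleGraph V} [DecidableRel H.Adj] (hH : H.CliqueFree (r + 1)) :
      #H.edgeFinset ≤ #(turanGraph (card V) r).edgeFinset := by
    rw [card_edgeFinset_turanGraph]
    exact hH.card_edgeFinset_le
  suffices #Gᶜ.edgeFinset ≠ #(turanGraph (card V) r).edgeFinset by have := turan_bound hGc; omega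
  intro heq
  have hmax : Gᶜ.IsTuranMaximal r := ⟨hGc, fun H _ hH => heq ▸ turan_bound hH⟩
  obtain ⟨f⟩ := hmax.nonempty_iso_turanGraph
  exact not_connected_compl_turanGraph hV hr (f.compl.connected_iff.1 (by rwa [compl_compl]))

end SimpleGraph

theorem card_edgeFinset_turanGraph_two_add_choose_two (n : ℕ) :
    #(turanGraph n 2).edgeFinset + ((n + 1) / 2).choose 2 + (n / 2).choose 2 = n.choose 2 := by
  induction n using Nat.twoStepInduction with
  | zero => simp [card_edgeFinset_turanGraph]
  | one => simp [card_edgeFinset_turanGraph]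
  | more n ih _ =>
    have h1 : (n + 2 + 1) / 2 = (n + 1) / 2 + 1 := by omega
    have h2 : (n + 2) / 2 = n / 2 + 1 := by omega
    have hsucc (a : ℕ) : (a + 1).choose 2 = a.choose 2 + a := by
      rw [Nat.choose_succ_succ', Nat.choose_one_right, add_comm]
    rw [card_edgeFinset_turanGraph_add, h1, h2, hsucc ((n + 1) / 2), hsucc (n / 2), hsucc (n + 1),
      hsucc n, Nat.choose_self, Nat.add_one_sub_one, mul_one]
    omega

theorem indepAtMostTwo_iff_cliqueFree_compl {n : ℕ} {G : SimpleGraph (Fin n)} :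
    IndepAtMostTwo G ↔ Gᶜ.CliqueFree 3 := by
  constructor
  · intro h s hs
    obtain ⟨u, hu, v, hv, huv⟩ := h s hs.card_eq
    exact (hs.isClique hu hv huv.ne).2 huv
  · intro h s hs
    by_contra! hne
    exact h s ⟨fun u hu v hv huv => ⟨huv, hne u hu v hv⟩, hs⟩

theorem card_edgeFinset_compl_turanGraph_two (n : ℕ) :
    #(turanGraph n 2)ᶜ.edgeFinset = ((n + 1) / 2).choose 2 + (n / 2).choose 2 := by
  have hT := (turanGraph n 2).card_edgeFinset_add_card_edgeFinset_compl
  rw [Fintype.card_fin] at hT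
  have := card_edgeFinset_turanGraph_two_add_choose_two n
  omega

theorem stmt_11 (n : ℕ) (hn : 3 ≤ n) :
    IsLeast {m : ℕ | ∃ G : SimpleGraph (Fin n),
        G.Connected ∧ IndepAtMostTwo G ∧ G.edgeSet.ncard = m}
      (((n + 1) / 2).choose 2 + (n / 2).choose 2 + 1) := by
  classical
  refine ⟨⟨(turanGraph n 2)ᶜ ⊔ edge ⟨0, by omega⟩ ⟨1, by omega⟩, ?_, ?_, ?_⟩, ?_⟩
  · refine connected_sup_edge_of_reachable fun v => ?_
    simp only [reachable_compl_turanGraph_iff]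
    omega
  · rw [indepAtMostTwo_iff_cliqueFree_compl]
    exact (turanGraph_cliqueFree two_pos).anti (compl_le_iff_compl_le.1 le_sup_left)
  · rw [← coe_edgeFinset, Set.ncard_coe_finset, card_edgeFinset_sup_edge,
      card_edgeFinset_compl_turanGraph_two]
    · exact fun h => by simpa using reachable_compl_turanGraph_iff.1 h.reachable
    · simp
  · rintro m ⟨G, hG, hind, rfl⟩
    have := card_edgeFinset_compl_turanGraph_lt_of_connected le_rfl (by rw [Fintype.card_fin]; omega) hG
      (indepAtMostTwo_iff_cliqueFree_compl.1 hind)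
    rw [Fintype.card_fin, card_edgeFinset_compl_turanGraph_two] at this
    rwa [← coe_edgeFinset, Set.ncard_coe_finset]
end

section
/- For all n > r ≥ 2, C(n,r) ≥ ⌈(n/(r+1))·C(n-1,r-1)⌉ (Schönheim bound). -/
open Finset

lemma covering_nonempty (n r : ℕ) (hn : r + 1 ≤ n) :
    ∃ B : Finset (Finset ℕ), IsCovering n (r+1) r B := by
  refine ⟨(Finset.Icc 1 n).powersetCard (r+1), fun b hb => Finset.mem_powersetCard.mp hb, ?_⟩
  intro s hs hcard
  have hcardIcc : (Finset.Icc 1 n).card = n := by simp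
  obtain ⟨u, hsu, hut, hu⟩ := Finset.exists_subsuperset_card_eq (n := r+1) hs (by omega) (by omega)
  exact ⟨u, Finset.mem_powersetCard.mpr ⟨hut, hu⟩, hsu⟩

lemma deg_ge (n r : ℕ) (hr : 2 ≤ r) (hn : r < n) (B : Finset (Finset ℕ))
    (hB : IsCovering n (r+1) r B) (x : ℕ) (hx : x ∈ Finset.Icc 1 n) :
    cNum (n-1) (r-1) ≤ (B.filter (fun b => x ∈ b)).card := by
  have hn1 : 1 ≤ n := by omega
  have hxmem := Finset.mem_Icc.mp hx
  set σ := Equiv.swap x n with hσ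
  have hσIcc : ∀ y ∈ Finset.Icc 1 n, σ y ∈ Finset.Icc 1 n := by
    intro y hy
    rcases eq_or_ne y x with rfl | hyx
    · rw [hσ, Equiv.swap_apply_left]; exact Finset.mem_Icc.mpr ⟨hn1, le_refl n⟩
    · rcases eq_or_ne y n with rfl | hyn
      · rw [hσ, Equiv.swap_apply_right]; exact hx
      · rw [hσ, Equiv.swap_apply_of_ne_of_ne hyx hyn]; exact hy
  set B' := (B.filter (fun b => x ∈ b)).image (fun b => (b.image σ).erase n) with hB'
  have hcov : IsCovering (n-1) r (r-1) B' := by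
    constructor
    · intro b' hb'
      obtain ⟨b, hb, rfl⟩ := Finset.mem_image.mp hb'
      rw [Finset.mem_filter] at hb
      obtain ⟨hbB, hxb⟩ := hb
      obtain ⟨hbsub, hbcard⟩ := hB.1 b hbB
      constructor
      · intro y hy
        rw [Finset.mem_erase] at hy
        obtain ⟨hyn, hy⟩ := hy
        obtain ⟨z, hz, rfl⟩ := Finset.mem_image.mp hy
        have := Finset.mem_Icc.mp (hσIcc z (hbsub hz))
        exact Finset.mem_Icc.mpr ⟨this.1, by omega⟩
      · have h1 : (b.image σ).card = r + 1 := by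
          rw [Finset.card_image_of_injective _ σ.injective, hbcard]
        have h2 : n ∈ b.image σ :=
          Finset.mem_image.mpr ⟨x, hxb, Equiv.swap_apply_left x n⟩
        rw [Finset.card_erase_of_mem h2, h1]; omega
    · intro s hs hscard
      have hsIcc : ∀ y ∈ s, y ∈ Finset.Icc 1 n ∧ y ≠ n := by
        intro y hy
        have := Finset.mem_Icc.mp (hs hy)
        exact ⟨Finset.mem_Icc.mpr ⟨this.1, by omega⟩, by omega⟩
      have hxns' : x ∉ s.image σ := by
        intro hmem
        obtain ⟨z, hz, hzx⟩ := Finset.mem_image.mp hmem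
        have h2 : σ (σ z) = σ x := congrArg σ hzx
        rw [hσ, Equiv.swap_apply_self, Equiv.swap_apply_left] at h2
        exact (hsIcc z hz).2 h2
      set t := insert x (s.image σ) with ht
      have htcard : t.card = r := by
        rw [Finset.card_insert_of_notMem hxns',
          Finset.card_image_of_injective _ σ.injective, hscard]
        omega
      have htsub : t ⊆ Finset.Icc 1 n := by
        intro y hy
        rcases Finset.mem_insert.mp hy with rfl | hy
        · exact hx
        · obtain ⟨z, hz, rfl⟩ := Finset.mem_image.mp hy
          exact hσIcc z (hsIcc z hz).1
      obtain ⟨b, hbB, htb⟩ := hB.2 t htsub htcard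
      have hxb : x ∈ b := htb (Finset.mem_insert_self x _)
      refine ⟨(b.image σ).erase n, Finset.mem_image.mpr
        ⟨b, Finset.mem_filter.mpr ⟨hbB, hxb⟩, rfl⟩, ?_⟩
      intro y hy
      refine Finset.mem_erase.mpr ⟨(hsIcc y hy).2, ?_⟩
      have : σ y ∈ b := htb (Finset.mem_insert_of_mem (Finset.mem_image_of_mem σ hy))
      exact Finset.mem_image.mpr ⟨σ y, this, by rw [hσ, Equiv.swap_apply_self]⟩
  have h1 : cNum (n-1) (r-1) ≤ B'.card := by
    have e : (r - 1) + 1 = r := by omega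
    exact Nat.sInf_le ⟨B', by rw [e]; exact hcov, rfl⟩
  exact h1.trans (Finset.card_image_le)

lemma mainx (n r : ℕ) (hr : 2 ≤ r) (hn : r < n) :
    (⌈((n : ℚ) / (r + 1)) * (cNum (n - 1) (r - 1) : ℚ)⌉ : ℤ) ≤ (cNum n r : ℤ) := by
  obtain ⟨B, hB⟩ := covering_nonempty n r (by omega)
  have hne : (cNum n r) ∈ {m | ∃ B : Finset (Finset ℕ), IsCovering n (r+1) r B ∧ B.card = m} :=
    Nat.sInf_mem ⟨B.card, B, hB, rfl⟩
  obtain ⟨M, hM, hMcard⟩ := hne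
  -- double counting
  have hsum : ∑ x ∈ Finset.Icc 1 n, (M.filter (fun b => x ∈ b)).card = (r+1) * M.card := by
    calc ∑ x ∈ Finset.Icc 1 n, (M.filter (fun b => x ∈ b)).card
        = ∑ x ∈ Finset.Icc 1 n, ∑ b ∈ M, if x ∈ b then 1 else 0 :=
          Finset.sum_congr rfl fun x _ => Finset.card_filter _ _
      _ = ∑ b ∈ M, ∑ x ∈ Finset.Icc 1 n, if x ∈ b then 1 else 0 := Finset.sum_comm
      _ = ∑ b ∈ M, b.card := by
          refine Finset.sum_congr rfl fun b hb => ?_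
          rw [← Finset.card_filter, Finset.filter_mem_eq_inter,
            Finset.inter_eq_right.mpr (hM.1 b hb).1]
      _ = (r+1) * M.card := by
          rw [Finset.sum_congr rfl fun b hb => (hM.1 b hb).2, Finset.sum_const,
            smul_eq_mul, mul_comm]
  have hlow : n * cNum (n-1) (r-1) ≤ (r+1) * M.card := by
    rw [← hsum]
    calc n * cNum (n-1) (r-1) = ∑ _x ∈ Finset.Icc 1 n, cNum (n-1) (r-1) := by
          rw [Finset.sum_const, smul_eq_mul, Nat.card_Icc]
          norm_num
      _ ≤ ∑ x ∈ Finset.Icc 1 n, (M.filter (fun b => x ∈ b)).card :=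
          Finset.sum_le_sum fun x hx => deg_ge n r hr hn M hM x hx
  rw [hMcard] at hlow
  rw [Int.ceil_le]
  push_cast
  rw [div_mul_eq_mul_div, div_le_iff₀ (by positivity)]
  calc ((n:ℚ) * cNum (n-1) (r-1)) ≤ ((r+1) * cNum n r : ℕ) := by exact_mod_cast hlow
    _ = (cNum n r : ℚ) * ((r:ℚ)+1) := by push_cast; ring

theorem stmt_12 (n r : ℕ) (hr : 2 ≤ r) (hn : r < n) :
    (⌈((n : ℚ) / (r + 1)) * (cNum (n - 1) (r - 1) : ℚ)⌉ : ℤ) ≤ (cNum n r : ℤ) :=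
  mainx n r hr hn
end

section
/- For all n ≥ r+1 ≥ 3, CC(n,r) ≤ CC(n-1,r) + C(n-1,r-1). -/
open Finset

lemma card_Icc_one (m : ℕ) : (Finset.Icc 1 m).card = m := by
  rw [Nat.card_Icc]; omega

lemma not_mem_Icc_succ (m : ℕ) : m + 1 ∉ Finset.Icc 1 m := by
  simp [Finset.mem_Icc]

lemma exists_covering (m k r : ℕ) (h1 : r ≤ k) (h2 : k ≤ m) :
    ∃ B : Finset (Finset ℕ), IsCovering m k r B := by
  refine ⟨Finset.powersetCard k (Finset.Icc 1 m), ?_, ?_⟩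
  · intro b hb
    rw [Finset.mem_powersetCard] at hb
    exact hb
  · intro s hs hcard
    obtain ⟨u, hsu, hu, hucard⟩ := Finset.exists_subsuperset_card_eq (n := k) hs
      (by omega) (by rw [card_Icc_one]; omega)
    exact ⟨u, Finset.mem_powersetCard.2 ⟨hu, hucard⟩, hsu⟩

lemma singleton_connected (r : ℕ) (a : Finset ℕ) :
    IsConnectedFamily r ({a} : Finset (Finset ℕ)) := by
  have hsub : ∀ x y : ({a} : Finset (Finset ℕ)), x = y := by
    rintro ⟨x, hx⟩ ⟨y, hy⟩
    simp only [Finset.mem_singleton] at hx hy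
    subst hx; subst hy; rfl
  unfold IsConnectedFamily
  rw [SimpleGraph.connected_iff]
  refine ⟨fun x y => ?_, ⟨⟨a, Finset.mem_singleton_self a⟩⟩⟩
  rw [hsub x y]

lemma glue (m r : ℕ) (B D : Finset (Finset ℕ))
    (hB : IsCovering m (r+1) r B) (hBc : IsConnectedFamily r B)
    (hD : IsCovering m r (r-1) D) :
    ∃ U : Finset (Finset ℕ), IsCovering (m+1) (r+1) r U ∧ IsConnectedFamily r U ∧
      U.card ≤ B.card + D.card := by
  classical
  set D' := D.image (insert (m+1)) with hD'def
  refine ⟨B ∪ D', ⟨?_, ?_⟩, ?_, ?_⟩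
  · -- blocks
    intro b hb
    rcases Finset.mem_union.1 hb with h | h
    · obtain ⟨h1, h2⟩ := hB.1 b h
      exact ⟨h1.trans (Finset.Icc_subset_Icc_right (by omega)), h2⟩
    · obtain ⟨d, hd, rfl⟩ := Finset.mem_image.1 h
      obtain ⟨h1, h2⟩ := hD.1 d hd
      have hmd : m + 1 ∉ d := fun h => not_mem_Icc_succ m (h1 h)
      constructor
      · intro x hx
        rcases Finset.mem_insert.1 hx with rfl | hx
        · simp [Finset.mem_Icc]
        · have := h1 hx; rw [Finset.mem_Icc] at this ⊢; omega
      · rw [Finset.card_insert_of_notMem hmd, h2]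
  · -- covering
    intro s hs hcard
    by_cases hms : m + 1 ∈ s
    · have hsub : s.erase (m+1) ⊆ Finset.Icc 1 m := by
        intro x hx
        have hx' := hs (Finset.mem_of_mem_erase hx)
        have hne := Finset.ne_of_mem_erase hx
        rw [Finset.mem_Icc] at hx' ⊢; omega
      have hcard' : (s.erase (m+1)).card = r - 1 := by
        rw [Finset.card_erase_of_mem hms, hcard]
      obtain ⟨d, hd, hsd⟩ := hD.2 _ hsub hcard'
      refine ⟨insert (m+1) d, Finset.mem_union_right _ (Finset.mem_image_of_mem _ hd), ?_⟩
      intro x hx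
      by_cases hxm : x = m + 1
      · subst hxm; exact Finset.mem_insert_self _ _
      · exact Finset.mem_insert_of_mem (hsd (Finset.mem_erase.2 ⟨hxm, hx⟩))
    · have hsub : s ⊆ Finset.Icc 1 m := by
        intro x hx
        have hx' := hs hx
        have hxne : x ≠ m + 1 := fun h => hms (h ▸ hx)
        rw [Finset.mem_Icc] at hx' ⊢; omega
      obtain ⟨b, hb, hsb⟩ := hB.2 s hsub hcard
      exact ⟨b, Finset.mem_union_left _ hb, hsb⟩
  · -- connectivity
    unfold IsConnectedFamily at hBc ⊢
    set U : Finset (Finset ℕ) := B ∪ D' with hUdef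
    let f : B → U := fun b => ⟨b.1, Finset.mem_union_left _ b.2⟩
    let G := SimpleGraph.fromRel (fun b c : U => r ≤ ((b : Finset ℕ) ∩ (c : Finset ℕ)).card)
    let hom : (SimpleGraph.fromRel
        (fun b c : B => r ≤ ((b : Finset ℕ) ∩ (c : Finset ℕ)).card)) →g G := by
      refine ⟨f, ?_⟩
      intro a b hab
      rw [SimpleGraph.fromRel_adj] at hab ⊢
      refine ⟨?_, hab.2⟩
      intro h
      apply hab.1
      apply Subtype.ext
      have : (f a).1 = (f b).1 := congrArg Subtype.val h
      exact this
    have key : ∀ x : U, ∃ y : U, (y : Finset ℕ) ∈ B ∧ G.Reachable x y := by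
      intro x
      rcases Finset.mem_union.1 x.2 with hx | hx
      · exact ⟨x, hx, SimpleGraph.Reachable.refl x⟩
      · obtain ⟨d, hd, hxd⟩ := Finset.mem_image.1 hx
        obtain ⟨hd1, hd2⟩ := hD.1 d hd
        obtain ⟨b, hb, hdb⟩ := hB.2 d hd1 hd2
        obtain ⟨hb1, _⟩ := hB.1 b hb
        refine ⟨⟨b, Finset.mem_union_left _ hb⟩, hb, SimpleGraph.Adj.reachable ?_⟩
        rw [SimpleGraph.fromRel_adj]
        constructor
        · intro h
          have hvb : (x : Finset ℕ) = b := congrArg Subtype.val h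
          have : m + 1 ∈ b := by
            rw [← hvb, ← hxd]; exact Finset.mem_insert_self _ _
          exact not_mem_Icc_succ m (hb1 this)
        · left
          have hsubd : d ⊆ (x : Finset ℕ) ∩ b := by
            intro z hz
            rw [Finset.mem_inter, ← hxd]
            exact ⟨Finset.mem_insert_of_mem hz, hdb hz⟩
          calc r = d.card := hd2.symm
            _ ≤ _ := Finset.card_le_card hsubd
    have hne : Nonempty U := by
      obtain ⟨b⟩ := hBc.nonempty
      exact ⟨f b⟩
    rw [SimpleGraph.connected_iff]
    refine ⟨fun x y => ?_, hne⟩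
    obtain ⟨x', hx', rx⟩ := key x
    obtain ⟨y', hy', ry⟩ := key y
    have hmid : G.Reachable x' y' := by
      have h0 := hBc.preconnected ⟨x'.1, hx'⟩ ⟨y'.1, hy'⟩
      have h1 := h0.map hom
      have e1 : hom ⟨x'.1, hx'⟩ = x' := Subtype.ext rfl
      have e2 : hom ⟨y'.1, hy'⟩ = y' := Subtype.ext rfl
      rwa [e1, e2] at h1
    exact rx.trans (hmid.trans ry.symm)
  · calc (B ∪ D').card ≤ B.card + D'.card := Finset.card_union_le _ _
      _ ≤ B.card + D.card := Nat.add_le_add_left Finset.card_image_le _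

lemma exists_cc (r : ℕ) (m : ℕ) (hm : r + 1 ≤ m) :
    ∃ B : Finset (Finset ℕ), IsCovering m (r+1) r B ∧ IsConnectedFamily r B := by
  induction m, hm using Nat.le_induction with
  | base =>
    refine ⟨{Finset.Icc 1 (r+1)}, ⟨?_, ?_⟩, singleton_connected _ _⟩
    · intro b hb
      rw [Finset.mem_singleton] at hb
      subst hb
      exact ⟨subset_rfl, card_Icc_one _⟩
    · intro s hs _
      exact ⟨Finset.Icc 1 (r+1), Finset.mem_singleton_self _, hs⟩
  | succ m hm ih =>
    obtain ⟨B, hB, hBc⟩ := ih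
    obtain ⟨D, hD⟩ := exists_covering m r (r-1) (by omega) (by omega)
    obtain ⟨U, h1, h2, _⟩ := glue m r B D hB hBc hD
    exact ⟨U, h1, h2⟩

theorem stmt_13 (n r : ℕ) (hr : 3 ≤ r + 1) (hn : r + 1 ≤ n) :
    ccNum n r ≤ ccNum (n - 1) r + cNum (n - 1) (r - 1) := by
  obtain ⟨m, rfl⟩ : ∃ m, n = m + 1 := ⟨n - 1, by omega⟩
  simp only [Nat.add_sub_cancel]
  have hrm : r ≤ m := by omega
  have hr1 : r - 1 + 1 = r := by omega
  have hcn : cNum m (r-1) = coveringNum m r (r-1) := by rw [cNum, hr1]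
  have hS2ne : {k | ∃ B : Finset (Finset ℕ), IsCovering m r (r-1) B ∧ B.card = k}.Nonempty := by
    obtain ⟨D, hD⟩ := exists_covering m r (r-1) (by omega) hrm
    exact ⟨D.card, D, hD, rfl⟩
  obtain ⟨D, hD, hDcard⟩ := Nat.sInf_mem hS2ne
  by_cases hm : r + 1 ≤ m
  · have hS1ne : {k | ∃ B : Finset (Finset ℕ),
        IsCovering m (r+1) r B ∧ IsConnectedFamily r B ∧ B.card = k}.Nonempty := by
      obtain ⟨B, hB, hBc⟩ := exists_cc r m hm
      exact ⟨B.card, B, hB, hBc, rfl⟩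
    obtain ⟨B, hB, hBc, hBcard⟩ := Nat.sInf_mem hS1ne
    obtain ⟨U, hU, hUc, hUcard⟩ := glue m r B D hB hBc hD
    have hle : ccNum (m+1) r ≤ U.card := Nat.sInf_le ⟨U, hU, hUc, rfl⟩
    have e1 : B.card = ccNum m r := hBcard
    have e2 : D.card = cNum m (r-1) := by rw [hcn]; exact hDcard
    omega
  · have hm' : r = m := by omega
    subst hm'
    have h1 : ccNum (r+1) r ≤ 1 := by
      apply Nat.sInf_le
      refine ⟨{Finset.Icc 1 (r+1)}, ⟨?_, ?_⟩, singleton_connected _ _,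
        Finset.card_singleton _⟩
      · intro b hb
        rw [Finset.mem_singleton] at hb
        subst hb
        exact ⟨subset_rfl, card_Icc_one _⟩
      · intro s hs _
        exact ⟨Finset.Icc 1 (r+1), Finset.mem_singleton_self _, hs⟩
    have h2 : 1 ≤ cNum r (r-1) := by
      rw [hcn, coveringNum]
      rw [Nat.one_le_iff_ne_zero, Ne, Nat.sInf_eq_zero]
      rintro (⟨B0, hcov, hcard0⟩ | hemp)
      · have hB0 : B0 = ∅ := Finset.card_eq_zero.1 hcard0
        obtain ⟨t, hts, htc⟩ := Finset.exists_subset_card_eq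
          (n := r - 1) (s := Finset.Icc 1 r) (by rw [card_Icc_one]; omega)
        obtain ⟨b, hb, -⟩ := hcov.2 t hts htc
        rw [hB0] at hb
        exact absurd hb (Finset.notMem_empty b)
      · exact absurd hemp (Set.nonempty_iff_ne_empty.1 hS2ne)
    omega
end

section
/- For all n ≥ r+1 ≥ 3, CC(n,r) ≤ Σ_{i=r}^{n-1} C(i,r-1). -/
open Finset

lemma existsCovering (n k r : ℕ) (hkn : k ≤ n) (hrk : r ≤ k) :
    ∃ C : Finset (Finset ℕ), IsCovering n k r C := by
  refine ⟨Finset.powersetCard k (Finset.Icc 1 n), ?_, ?_⟩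
  · intro b hb
    rw [Finset.mem_powersetCard] at hb
    exact hb
  · intro s hs hcard
    have hcardIcc : (Finset.Icc 1 n).card = n := by simp
    obtain ⟨u, hsu, hut, hucard⟩ :=
      Finset.exists_subsuperset_card_eq (n := k) hs (by omega) (by omega)
    exact ⟨u, Finset.mem_powersetCard.2 ⟨hut, hucard⟩, hsu⟩

lemma one_le_cNum (r : ℕ) (hr : 2 ≤ r) : 1 ≤ cNum r (r - 1) := by
  have hrr : r - 1 + 1 = r := by omega
  rw [cNum, hrr, coveringNum]
  rw [Nat.one_le_iff_ne_zero, Ne, Nat.sInf_eq_zero]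
  push_neg
  constructor
  · rintro ⟨C, ⟨-, hcov⟩, hC0⟩
    rw [Finset.card_eq_zero] at hC0
    subst hC0
    obtain ⟨b, hb, -⟩ := hcov (Finset.Icc 1 (r-1))
      (Finset.Icc_subset_Icc le_rfl (by omega)) (by simp)
    exact absurd hb (Finset.notMem_empty b)
  · obtain ⟨C, hC⟩ := existsCovering r r (r-1) le_rfl (by omega)
    exact ⟨C.card, C, hC, rfl⟩

lemma key (r : ℕ) (hr : 2 ≤ r) : ∀ n, r + 1 ≤ n →
    ∃ B : Finset (Finset ℕ), IsCovering n (r+1) r B ∧ IsConnectedFamily r B ∧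
      B.card ≤ ∑ i ∈ Finset.Ico r n, cNum i (r-1) := by
  refine Nat.le_induction ?_ ?_
  · -- base case n = r + 1
    refine ⟨{Finset.Icc 1 (r+1)}, ⟨?_, ?_⟩, ?_, ?_⟩
    · intro b hb
      rw [Finset.mem_singleton] at hb
      subst hb
      exact ⟨le_rfl, by simp⟩
    · intro s hs hcard
      exact ⟨Finset.Icc 1 (r+1), Finset.mem_singleton_self _, hs⟩
    · have hne : Nonempty {x // x ∈ ({Finset.Icc 1 (r+1)} : Finset (Finset ℕ))} :=
        ⟨⟨Finset.Icc 1 (r+1), Finset.mem_singleton_self _⟩⟩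
      rw [IsConnectedFamily, SimpleGraph.connected_iff]
      refine ⟨?_, hne⟩
      intro u v
      have : u = v := Subtype.ext (by
          have hu := u.2; have hv := v.2
          rw [Finset.mem_singleton] at hu hv
          rw [hu, hv])
      rw [this]
    · have hmem : (r : ℕ) ∈ Finset.Ico r (r+1) := by simp
      have h1 : cNum r (r-1) ≤ ∑ i ∈ Finset.Ico r (r+1), cNum i (r-1) :=
        Finset.single_le_sum (f := fun i => cNum i (r-1)) (fun i _ => Nat.zero_le _) hmem
      rw [Finset.card_singleton]
      exact le_trans (one_le_cNum r hr) h1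
  · -- inductive step
    rintro n hn ⟨B, ⟨hBsub, hBcov⟩, hBconn, hBcard⟩
    -- optimal (n, r, r-1)-covering
    have hSne : {m | ∃ C : Finset (Finset ℕ), IsCovering n r (r-1) C ∧ C.card = m}.Nonempty := by
      obtain ⟨C, hC⟩ := existsCovering n r (r-1) (by omega) (by omega)
      exact ⟨C.card, C, hC, rfl⟩
    obtain ⟨C, ⟨hCsub, hCcov⟩, hCcard⟩ := Nat.sInf_mem hSne
    have hCval : C.card = cNum n (r-1) := by
      have hrr : r - 1 + 1 = r := by omega
      rw [cNum, hrr, coveringNum]; exact hCcard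
    set B' : Finset (Finset ℕ) := B ∪ C.image (insert (n+1)) with hB'
    have hmemB : ∀ b ∈ B, b ∈ B' := fun b hb => Finset.mem_union_left _ hb
    have hnotin : ∀ c ∈ C, (n+1) ∉ c := by
      intro c hc hmem
      have := (hCsub c hc).1 hmem
      rw [Finset.mem_Icc] at this
      omega
    have hBn1 : ∀ b ∈ B, (n+1) ∉ b := by
      intro b hb hmem
      have := (hBsub b hb).1 hmem
      rw [Finset.mem_Icc] at this
      omega
    have hcovB' : IsCovering (n+1) (r+1) r B' := by
      constructor
      · intro b hb
        rcases Finset.mem_union.1 hb with hb | hb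
        · exact ⟨(hBsub b hb).1.trans (Finset.Icc_subset_Icc le_rfl (by omega)),
            (hBsub b hb).2⟩
        · obtain ⟨c, hc, rfl⟩ := Finset.mem_image.1 hb
          refine ⟨?_, ?_⟩
          · intro x hx
            rcases Finset.mem_insert.1 hx with rfl | hx
            · simp
            · exact (Finset.Icc_subset_Icc le_rfl (by omega)) ((hCsub c hc).1 hx)
          · rw [Finset.card_insert_of_notMem (hnotin c hc), (hCsub c hc).2]
      · intro s hs hcard
        by_cases hmem : (n+1) ∈ s
        · set t := s.erase (n+1) with ht
          have htcard : t.card = r - 1 := by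
            rw [ht, Finset.card_erase_of_mem hmem, hcard]
          have htsub : t ⊆ Finset.Icc 1 n := by
            intro x hx
            have hxne := Finset.ne_of_mem_erase hx
            have := hs (Finset.mem_of_mem_erase hx)
            rw [Finset.mem_Icc] at this ⊢
            omega
          obtain ⟨c, hc, htc⟩ := hCcov t htsub htcard
          refine ⟨insert (n+1) c, Finset.mem_union_right _
            (Finset.mem_image_of_mem _ hc), ?_⟩
          intro x hx
          rcases eq_or_ne x (n+1) with rfl | hne
          · exact Finset.mem_insert_self _ _
          · exact Finset.mem_insert_of_mem (htc (Finset.mem_erase.2 ⟨hne, hx⟩))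
        · have hssub : s ⊆ Finset.Icc 1 n := by
            intro x hx
            have := hs hx
            rw [Finset.mem_Icc] at this ⊢
            have : x ≠ n + 1 := fun h => hmem (h ▸ hx)
            omega
          obtain ⟨b, hb, hsb⟩ := hBcov s hssub hcard
          exact ⟨b, hmemB b hb, hsb⟩
    refine ⟨B', hcovB', ?_, ?_⟩
    · -- connectivity
      show (SimpleGraph.fromRel
        (fun b c : B' => r ≤ ((b : Finset ℕ) ∩ (c : Finset ℕ)).card)).Connected
      set G := SimpleGraph.fromRel
        (fun b c : B' => r ≤ ((b : Finset ℕ) ∩ (c : Finset ℕ)).card) with hG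
      set GB := SimpleGraph.fromRel
        (fun b c : B => r ≤ ((b : Finset ℕ) ∩ (c : Finset ℕ)).card) with hGB
      have hBconn' : GB.Connected := hBconn
      have hBne : B.Nonempty := by
        obtain ⟨v⟩ := hBconn'.nonempty
        exact ⟨v.1, v.2⟩
      -- hom from GB to G
      let f : SimpleGraph.Hom GB G := by
        refine ⟨fun b => ⟨b.1, hmemB b.1 b.2⟩, ?_⟩
        rintro a b ⟨hne, h⟩
        exact ⟨fun h' => hne (Subtype.ext (Subtype.mk_eq_mk.mp h')), h⟩
      -- every vertex reaches a vertex of B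
      have hreach : ∀ v : ↥B', ∃ w : ↥B', w.1 ∈ B ∧ G.Reachable v w := by
        intro v
        rcases Finset.mem_union.1 v.2 with hv | hv
        · exact ⟨v, hv, SimpleGraph.Reachable.refl v⟩
        · obtain ⟨c, hc, hvc⟩ := Finset.mem_image.1 hv
          obtain ⟨b, hb, hcb⟩ := hBcov c (hCsub c hc).1 (hCsub c hc).2
          refine ⟨⟨b, hmemB b hb⟩, hb, SimpleGraph.Adj.reachable ?_⟩
          refine ⟨?_, Or.inl ?_⟩
          · intro h
            have : v.1 = b := congrArg Subtype.val h
            exact hBn1 b hb (this ▸ hvc ▸ Finset.mem_insert_self (n+1) c)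
          · have hsub : c ⊆ v.1 ∩ b := by
              intro x hx
              exact Finset.mem_inter.2 ⟨hvc ▸ Finset.mem_insert_of_mem hx, hcb hx⟩
            calc r = c.card := ((hCsub c hc).2).symm
              _ ≤ _ := Finset.card_le_card hsub
      rw [SimpleGraph.connected_iff]
      constructor
      · intro u v
        obtain ⟨wu, hwu, hru⟩ := hreach u
        obtain ⟨wv, hwv, hrv⟩ := hreach v
        have hmid : G.Reachable wu wv := by
          have h := hBconn'.preconnected ⟨wu.1, hwu⟩ ⟨wv.1, hwv⟩
          have := h.map f
          have e1 : f ⟨wu.1, hwu⟩ = wu := Subtype.ext rfl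
          have e2 : f ⟨wv.1, hwv⟩ = wv := Subtype.ext rfl
          rwa [e1, e2] at this
        exact (hru.trans hmid).trans hrv.symm
      · obtain ⟨b, hb⟩ := hBne
        exact ⟨⟨b, hmemB b hb⟩⟩
    · -- cardinality
      have h1 : B'.card ≤ B.card + C.card := by
        calc B'.card ≤ B.card + (C.image (insert (n+1))).card := Finset.card_union_le _ _
          _ ≤ B.card + C.card := by
              exact Nat.add_le_add_left (Finset.card_image_le) _
      rw [Finset.sum_Ico_succ_top (by omega : r ≤ n)]
      calc B'.card ≤ B.card + C.card := h1
        _ ≤ (∑ i ∈ Finset.Ico r n, cNum i (r-1)) + cNum n (r-1) := by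
            rw [hCval]; exact Nat.add_le_add_right hBcard _

theorem stmt_14 (n r : ℕ) (hr : 3 ≤ r + 1) (hn : r + 1 ≤ n) :
    ccNum n r ≤ ∑ i ∈ Finset.Ico r n, cNum i (r - 1) := by
  obtain ⟨B, hcov, hconn, hcard⟩ := key r (by omega) n hn
  exact le_trans (Nat.sInf_le ⟨B, hcov, hconn, rfl⟩) hcard
end

section
/- Let r ≥ 2 and m ≥ 0, and set n = r + 2m + 1. For i = 0,…,m define N_i to be the family of (r+1)-subsets of {1,…,n} of the form S ∪ {r+2i−1, r+2i, b} where S is an (r−2)-subset of {1,…,r+2i−2} and b ∈ {r+2i+1,…,r+2m+1}. Then the union of the N_i is an (n,r+1,r)-covering, i.e., every r-subset of {1,…,n} is contained in some block. -/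
open Finset

theorem stmt_15 (r m n : ℕ) (hr : 2 ≤ r) (hn : n = r + 2 * m + 1)
    (s : Finset ℕ) (hs : s ⊆ Finset.Icc 1 n) (hcard : s.card = r) :
    ∃ i ≤ m, ∃ S ⊆ Finset.Icc 1 (r + 2 * i - 2), S.card = r - 2 ∧
      ∃ b ∈ Finset.Icc (r + 2 * i + 1) n,
        s ⊆ S ∪ {r + 2 * i - 1, r + 2 * i, b} := by
  have h2 : 2 ≤ s.card := hcard ▸ hr
  have hne : s.Nonempty := Finset.card_pos.mp (by omega)
  set B := s.max' hne with hB
  have hBs : B ∈ s := s.max'_mem hne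
  have hne2 : (s.erase B).Nonempty := by
    rw [← Finset.card_pos, Finset.card_erase_of_mem hBs]; omega
  set A := (s.erase B).max' hne2 with hA
  have hAs' : A ∈ s.erase B := Finset.max'_mem _ hne2
  have hAne : A ≠ B := Finset.ne_of_mem_erase hAs'
  have hAs : A ∈ s := Finset.mem_of_mem_erase hAs'
  have hAB : A < B := lt_of_le_of_ne (s.le_max' A hAs) hAne
  have hBn : B ≤ n := (Finset.mem_Icc.mp (hs hBs)).2
  have hAr : r - 1 ≤ A := by
    have hsub : s.erase B ⊆ Finset.Icc 1 A := by
      intro x hx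
      rcases Finset.mem_Icc.mp (hs (Finset.mem_of_mem_erase hx)) with ⟨h1, _⟩
      exact Finset.mem_Icc.mpr ⟨h1, Finset.le_max' _ _ hx⟩
    have hc := Finset.card_le_card hsub
    rw [Finset.card_erase_of_mem hBs, hcard, Nat.card_Icc] at hc
    omega
  set i := (A + 1 - r) / 2 with hidef
  have hi1 : r + 2 * i - 1 ≤ A := by omega
  have hi2 : A ≤ r + 2 * i := by omega
  have him : i ≤ m := by omega
  refine ⟨i, him, ?_⟩
  set T := (s.erase B).erase A with hT
  have hTcard : T.card = r - 2 := by
    rw [hT, Finset.card_erase_of_mem hAs', Finset.card_erase_of_mem hBs, hcard]; omega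
  have hTmem : ∀ x ∈ T, x ∈ s ∧ x < A := by
    intro x hx
    refine ⟨Finset.mem_of_mem_erase (Finset.mem_of_mem_erase hx), ?_⟩
    exact lt_of_le_of_ne (Finset.le_max' _ _ (Finset.mem_of_mem_erase hx))
      (Finset.ne_of_mem_erase hx)
  have hTmem' : ∀ x ∈ s, x ≠ A → x ≠ B → x ∈ T := by
    intro x hx h1 h2
    exact Finset.mem_erase.mpr ⟨h1, Finset.mem_erase.mpr ⟨h2, hx⟩⟩
  have hpos : ∀ x ∈ s, 1 ≤ x := fun x hx => (Finset.mem_Icc.mp (hs hx)).1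
  by_cases hkey : r + 2 * i - 1 ∈ T
  · -- then A = r + 2i, B ≥ r+2i+1
    have hAeq : A = r + 2 * i := by
      have := (hTmem _ hkey).2; omega
    have hBge : r + 2 * i + 1 ≤ B := by omega
    set T' := T.erase (r + 2 * i - 1) with hT'
    have hT'card : T'.card = r - 3 := by
      rw [hT', Finset.card_erase_of_mem hkey, hTcard]; omega
    have hT'sub : T' ⊆ Finset.Icc 1 (r + 2 * i - 2) := by
      intro x hx
      have hxT := Finset.mem_of_mem_erase hx
      have h1 := hpos x (hTmem _ hxT).1
      have h2 := (hTmem _ hxT).2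
      have h3 := Finset.ne_of_mem_erase hx
      exact Finset.mem_Icc.mpr ⟨h1, by omega⟩
    have hT3 : 1 ≤ T.card := Finset.card_pos.mpr ⟨_, hkey⟩
    have hr3 : 3 ≤ r := by omega
    have hex : (Finset.Icc 1 (r + 2 * i - 2) \ T').Nonempty := by
      rw [← Finset.card_pos, Finset.card_sdiff_of_subset hT'sub, Nat.card_Icc, hT'card]
      omega
    obtain ⟨x, hx⟩ := hex
    rw [Finset.mem_sdiff] at hx
    refine ⟨insert x T', fun y hy => ?_, ?_, B, Finset.mem_Icc.mpr ⟨hBge, hBn⟩, ?_⟩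
    · rcases Finset.mem_insert.mp hy with h | h
      · exact h ▸ hx.1
      · exact hT'sub h
    · rw [Finset.card_insert_of_notMem hx.2, hT'card]; omega
    · intro y hy
      simp only [Finset.mem_union, Finset.mem_insert, Finset.mem_singleton]
      by_cases hyB : y = B
      · tauto
      by_cases hyA : y = A
      · right; right; left; omega
      have hyT : y ∈ T := hTmem' y hy hyA hyB
      by_cases hyk : y = r + 2 * i - 1
      · tauto
      · exact Or.inl (Or.inr (Finset.mem_erase.mpr ⟨hyk, hyT⟩))
  · -- S = T
    have hTsub : T ⊆ Finset.Icc 1 (r + 2 * i - 2) := by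
      intro x hx
      have h1 := hpos x (hTmem _ hx).1
      have h2 := (hTmem _ hx).2
      have h3 : x ≠ r + 2 * i - 1 := fun h => hkey (h ▸ hx)
      exact Finset.mem_Icc.mpr ⟨h1, by omega⟩
    refine ⟨T, hTsub, hTcard, ?_⟩
    by_cases hBc : r + 2 * i + 1 ≤ B
    · refine ⟨B, Finset.mem_Icc.mpr ⟨hBc, hBn⟩, ?_⟩
      intro y hy
      simp only [Finset.mem_union, Finset.mem_insert, Finset.mem_singleton]
      by_cases hyB : y = B
      · tauto
      by_cases hyA : y = A
      · right; omega
      · exact Or.inl (hTmem' y hy hyA hyB)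
    · have hBeq : B = r + 2 * i := by omega
      refine ⟨r + 2 * i + 1, Finset.mem_Icc.mpr ⟨le_refl _, by omega⟩, ?_⟩
      intro y hy
      simp only [Finset.mem_union, Finset.mem_insert, Finset.mem_singleton]
      by_cases hyB : y = B
      · right; omega
      by_cases hyA : y = A
      · right; omega
      · exact Or.inl (hTmem' y hy hyA hyB)
end

section
/- Let r ≥ 2, m ≥ 0, n = r+2m+1, and for i ∈ {0,…,m} let N_i be the family of (r+1)-subsets S ∪ {r+2i−1, r+2i, b} with S an (r−2)-subset of {1,…,r+2i−2} and b ∈ {r+2i+1,…,n}. Then the block graph of N_i (blocks adjacent if sharing an r-subset) is connected. -/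
open Finset

/-- The family N_i of blocks S ∪ {r+2i−1, r+2i, b} with S an (r−2)-subset of
{1,…,r+2i−2} and b ∈ {r+2i+1,…,n}. -/
def familyN (n r i : ℕ) : Set (Finset ℕ) :=
  {blk | ∃ S ⊆ Finset.Icc 1 (r + 2 * i - 2), S.card = r - 2 ∧
    ∃ b ∈ Finset.Icc (r + 2 * i + 1) n, blk = S ∪ {r + 2 * i - 1, r + 2 * i, b}}


lemma memN {n r i : ℕ} {S : Finset ℕ} {b : ℕ}
    (hS : S ⊆ Finset.Icc 1 (r + 2 * i - 2)) (hc : S.card = r - 2)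
    (hb : b ∈ Finset.Icc (r + 2 * i + 1) n) :
    S ∪ {r + 2 * i - 1, r + 2 * i, b} ∈ familyN n r i :=
  ⟨S, hS, hc, b, hb, rfl⟩

lemma adjN {n r i : ℕ} {B1 B2 : Finset ℕ} (h1 : B1 ∈ familyN n r i)
    (h2 : B2 ∈ familyN n r i) (hne : B1 ≠ B2) (hcard : r ≤ (B1 ∩ B2).card) :
    (SimpleGraph.fromRel (fun b c : familyN n r i =>
      r ≤ ((b : Finset ℕ) ∩ (c : Finset ℕ)).card)).Adj ⟨B1, h1⟩ ⟨B2, h2⟩ := by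
  rw [SimpleGraph.fromRel_adj]
  exact ⟨fun h => hne (congrArg Subtype.val h), Or.inl hcard⟩

lemma reachN {r m n i : ℕ} (hr : 2 ≤ r) (hn : n = r + 2 * m + 1) (hi : i ≤ m) :
    ∀ (k : ℕ) (S1 : Finset ℕ) (b1 : ℕ)
      (hS1 : S1 ⊆ Finset.Icc 1 (r + 2 * i - 2)) (hc1 : S1.card = r - 2)
      (hb1 : b1 ∈ Finset.Icc (r + 2 * i + 1) n)
      (S2 : Finset ℕ) (b2 : ℕ)
      (hS2 : S2 ⊆ Finset.Icc 1 (r + 2 * i - 2)) (hc2 : S2.card = r - 2)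
      (hb2 : b2 ∈ Finset.Icc (r + 2 * i + 1) n),
      (S1 \ S2).card = k →
      (SimpleGraph.fromRel (fun b c : familyN n r i =>
        r ≤ ((b : Finset ℕ) ∩ (c : Finset ℕ)).card)).Reachable
        ⟨_, memN hS1 hc1 hb1⟩ ⟨_, memN hS2 hc2 hb2⟩ := by
  intro k
  induction k using Nat.strong_induction_on with
  | _ k ih =>
    intro S1 b1 hS1 hc1 hb1 S2 b2 hS2 hc2 hb2 hk
    have hxlt : r + 2 * i - 2 < r + 2 * i - 1 := by omega
    have hylt : r + 2 * i - 1 < r + 2 * i := by omega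
    have hblt : ∀ b ∈ Finset.Icc (r + 2 * i + 1) n, r + 2 * i < b := by
      intro b hb; exact lt_of_lt_of_le (by omega) (Finset.mem_Icc.mp hb).1
    have hSb : ∀ z ∈ S1 ∪ S2, z ≤ r + 2 * i - 2 := by
      intro z hz
      rcases Finset.mem_union.mp hz with h | h
      · exact (Finset.mem_Icc.mp (hS1 h)).2
      · exact (Finset.mem_Icc.mp (hS2 h)).2
    rcases Nat.eq_zero_or_pos k with hk0 | hkpos
    · -- S1 = S2
      subst hk0
      have hsub : S1 ⊆ S2 := by
        rw [← Finset.sdiff_eq_empty_iff_subset]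
        exact Finset.card_eq_zero.mp hk
      have hSeq : S1 = S2 := Finset.eq_of_subset_of_card_le hsub (by omega)
      subst hSeq
      rcases eq_or_ne b1 b2 with hb | hb
      · subst hb; exact SimpleGraph.Reachable.refl _
      · refine (adjN _ _ ?_ ?_).reachable
        · intro h
          have : b1 ∈ S1 ∪ {r + 2 * i - 1, r + 2 * i, b2} := by
            rw [← h]; simp
          have hb1' := (Finset.mem_Icc.mp hb1).1
          simp only [Finset.mem_union, Finset.mem_insert, Finset.mem_singleton] at this
          rcases this with h | h | h | h
          · have := hSb b1 (Finset.mem_union_left _ h); omega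
          · omega
          · omega
          · exact hb h
        · have hsub : S1 ∪ {r + 2 * i - 1, r + 2 * i} ⊆
              (S1 ∪ {r + 2 * i - 1, r + 2 * i, b1}) ∩ (S1 ∪ {r + 2 * i - 1, r + 2 * i, b2}) := by
            intro z hz
            simp only [Finset.mem_union, Finset.mem_insert, Finset.mem_singleton,
              Finset.mem_inter] at hz ⊢
            tauto
          have hd : Disjoint S1 ({r + 2 * i - 1, r + 2 * i} : Finset ℕ) := by
            rw [Finset.disjoint_right]
            intro z hz hz'
            have := hSb z (Finset.mem_union_left _ hz')
            simp only [Finset.mem_insert, Finset.mem_singleton] at hz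
            omega
          have hcard : (S1 ∪ {r + 2 * i - 1, r + 2 * i}).card = r := by
            rw [Finset.card_union_of_disjoint hd, hc1, Finset.card_pair (by omega)]
            omega
          calc r = (S1 ∪ {r + 2 * i - 1, r + 2 * i}).card := hcard.symm
            _ ≤ _ := Finset.card_le_card hsub
    · -- S1 ≠ S2, swap one element
      have hane : (S1 \ S2).Nonempty := Finset.card_pos.mp (by omega)
      obtain ⟨a, ha⟩ := hane
      have hcne : (S2 \ S1).Nonempty := by
        rw [← Finset.card_pos, Finset.card_sdiff_comm (by omega)]
        omega
      obtain ⟨c, hc⟩ := hcne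
      have haS1 : a ∈ S1 := (Finset.mem_sdiff.mp ha).1
      have hcS2 : c ∈ S2 := (Finset.mem_sdiff.mp hc).1
      have hcS1 : c ∉ S1 := (Finset.mem_sdiff.mp hc).2
      have hr3 : 3 ≤ r := by
        have := Finset.card_pos.mpr ⟨a, haS1⟩
        omega
      set S1' := insert c (S1.erase a) with hS1'def
      have hS1' : S1' ⊆ Finset.Icc 1 (r + 2 * i - 2) :=
        Finset.insert_subset (hS2 hcS2) ((Finset.erase_subset _ _).trans hS1)
      have hc1' : S1'.card = r - 2 := by
        rw [hS1'def, Finset.card_insert_of_notMem (fun h => hcS1 (Finset.mem_of_mem_erase h)),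
          Finset.card_erase_of_mem haS1, hc1]
        omega
      have hsd : (S1' \ S2).card = k - 1 := by
        rw [hS1'def, Finset.insert_sdiff_of_mem _ hcS2]
        have : S1.erase a \ S2 = (S1 \ S2).erase a := by
          ext z
          simp only [Finset.mem_sdiff, Finset.mem_erase]
          tauto
        rw [this, Finset.card_erase_of_mem ha, hk]
      have hstep : (SimpleGraph.fromRel (fun b c : familyN n r i =>
          r ≤ ((b : Finset ℕ) ∩ (c : Finset ℕ)).card)).Adj
          ⟨_, memN hS1 hc1 hb1⟩ ⟨_, memN hS1' hc1' hb1⟩ := by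
        refine adjN _ _ ?_ ?_
        · intro h
          have : c ∈ S1 ∪ {r + 2 * i - 1, r + 2 * i, b1} := by
            rw [h, hS1'def]; simp
          have hcle := (Finset.mem_Icc.mp (hS2 hcS2)).2
          have hb1' := (Finset.mem_Icc.mp hb1).1
          simp only [Finset.mem_union, Finset.mem_insert, Finset.mem_singleton] at this
          rcases this with h | h | h | h
          · exact hcS1 h
          · omega
          · omega
          · omega
        · have hsub : (S1.erase a) ∪ {r + 2 * i - 1, r + 2 * i, b1} ⊆
              (S1 ∪ {r + 2 * i - 1, r + 2 * i, b1}) ∩ (S1' ∪ {r + 2 * i - 1, r + 2 * i, b1}) := by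
            intro z hz
            simp only [Finset.mem_union, Finset.mem_insert, Finset.mem_singleton,
              Finset.mem_inter, hS1'def, Finset.mem_erase] at hz ⊢
            tauto
          have hb1' := (Finset.mem_Icc.mp hb1).1
          have hd : Disjoint (S1.erase a) ({r + 2 * i - 1, r + 2 * i, b1} : Finset ℕ) := by
            rw [Finset.disjoint_right]
            intro z hz hz'
            have := hSb z (Finset.mem_union_left _ (Finset.mem_of_mem_erase hz'))
            simp only [Finset.mem_insert, Finset.mem_singleton] at hz
            omega
          have hc3 : ({r + 2 * i - 1, r + 2 * i, b1} : Finset ℕ).card = 3 := by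
            rw [Finset.card_insert_of_notMem (by simp; omega),
              Finset.card_insert_of_notMem (by simp; omega), Finset.card_singleton]
          have hcard : ((S1.erase a) ∪ {r + 2 * i - 1, r + 2 * i, b1}).card = r := by
            rw [Finset.card_union_of_disjoint hd, Finset.card_erase_of_mem haS1, hc1, hc3]
            omega
          calc r = _ := hcard.symm
            _ ≤ _ := Finset.card_le_card hsub
      exact hstep.reachable.trans
        (ih (k - 1) (by omega) S1' b1 hS1' hc1' hb1 S2 b2 hS2 hc2 hb2 hsd)

theorem stmt_16 (r m n i : ℕ) (hr : 2 ≤ r) (hn : n = r + 2 * m + 1) (hi : i ≤ m) :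
    (SimpleGraph.fromRel (fun b c : familyN n r i =>
      r ≤ ((b : Finset ℕ) ∩ (c : Finset ℕ)).card)).Connected := by
  have hx : r + 2 * i + 1 ≤ n := by omega
  have hIcc : (Finset.Icc 1 (r - 2)).card = r - 2 := by
    rw [Nat.card_Icc]; omega
  have hS0 : Finset.Icc 1 (r - 2) ⊆ Finset.Icc 1 (r + 2 * i - 2) := by
    apply Finset.Icc_subset_Icc_right; omega
  have hb0 : r + 2 * i + 1 ∈ Finset.Icc (r + 2 * i + 1) n := Finset.mem_Icc.mpr ⟨le_refl _, hx⟩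
  have hne : Nonempty (familyN n r i) := ⟨⟨_, memN hS0 hIcc hb0⟩⟩
  refine ⟨?_⟩
  rintro ⟨u, hu⟩ ⟨v, hv⟩
  obtain ⟨S1, hS1, hc1, b1, hb1, rfl⟩ := hu
  obtain ⟨S2, hS2, hc2, b2, hb2, rfl⟩ := hv
  exact reachN hr hn hi _ S1 b1 hS1 hc1 hb1 S2 b2 hS2 hc2 hb2 rfl
end

section
/- For all n ≥ r+1 ≥ 3, CC(n,r) ≤ N(n,r), where N(n,r) = Σ_{i=0}^{⌈(n-r)/2⌉-1} (n−r−2i)·binom(r−2+2i, r−2) + ⌈(n-r)/2⌉ − 1 + δ₀·C(n−2,r−2), and δ₀ = 1 if n−r is even and 0 otherwise. -/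
open Finset

/-- The upper bound N(n,r) from Theorem 4.1. -/
noncomputable def boundN (n r : ℕ) : ℕ :=
  (∑ i ∈ Finset.range ((n - r + 1) / 2),
      (n - r - 2 * i) * (r - 2 + 2 * i).choose (r - 2)) +
    (n - r + 1) / 2 - 1 +
    (if Even (n - r) then cNum (n - 2) (r - 2) else 0)

namespace Stmt17

/-- A generic block at level `i` : an (r-2)-set `A` from the bottom part together
with the two level elements and one free element `x`. Here `t = r - 2`. -/
def blk (t i x : ℕ) (A : Finset ℕ) : Finset ℕ := A ∪ {t+1+2*i, t+2+2*i, x}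

/-- The family of blocks at level `i`. -/
def lev (t d i : ℕ) : Finset (Finset ℕ) :=
  (((Finset.Icc 1 (t+2*i)).powersetCard t) ×ˢ (Finset.Icc (t+3+2*i) (t+2+d))).image
    fun P => blk t i P.2 P.1

/-- The connector block between levels `i` and `i+1`. -/
def conn (t i : ℕ) : Finset ℕ := Finset.Icc 1 t ∪ {t+2+2*i, t+3+2*i, t+4+2*i}

/-- The whole family: levels, connectors, and (when `d` is even) the extra blocks
coming from a minimal covering `B₀`. -/
def famB (t d : ℕ) (B₀ : Finset (Finset ℕ)) : Finset (Finset ℕ) :=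
  ((Finset.range ((d+1)/2)).biUnion (lev t d) ∪
    (Finset.range ((d+1)/2 - 1)).image (conn t))
    ∪ B₀.image fun A => A ∪ {t+d+1, t+d+2}

lemma mem_blk {t i x a : ℕ} {A : Finset ℕ} :
    a ∈ blk t i x A ↔ a ∈ A ∨ a = t+1+2*i ∨ a = t+2+2*i ∨ a = x := by
  simp [blk, mem_union, mem_insert, mem_singleton]
  tauto

lemma mem_conn {t i a : ℕ} :
    a ∈ conn t i ↔ a ∈ Finset.Icc 1 t ∨ a = t+2+2*i ∨ a = t+3+2*i ∨ a = t+4+2*i := by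
  simp [conn, mem_union, mem_insert, mem_singleton]
  tauto

lemma card_union_one {S : Finset ℕ} {u : ℕ} (hu : ∀ a ∈ S, a < u) :
    (S ∪ {u}).card = S.card + 1 := by
  have hdis : Disjoint S ({u} : Finset ℕ) := by
    rw [disjoint_left]; intro a ha h'
    have := hu a ha
    simp only [mem_singleton] at h'
    omega
  rw [card_union_of_disjoint hdis, card_singleton]

lemma card_union_two {S : Finset ℕ} {u v : ℕ} (hu : ∀ a ∈ S, a < u) (huv : u < v) :
    (S ∪ {u, v}).card = S.card + 2 := by
  have hdis : Disjoint S ({u, v} : Finset ℕ) := by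
    rw [disjoint_left]; intro a ha h'
    have := hu a ha
    simp only [mem_insert, mem_singleton] at h'
    omega
  rw [card_union_of_disjoint hdis, card_insert_of_notMem
    (by simp only [mem_singleton]; omega), card_singleton]

lemma card_union_three {S : Finset ℕ} {u v w : ℕ} (hu : ∀ a ∈ S, a < u)
    (huv : u < v) (hvw : v < w) : (S ∪ {u, v, w}).card = S.card + 3 := by
  have hdis : Disjoint S ({u, v, w} : Finset ℕ) := by
    rw [disjoint_left]; intro a ha h'
    have := hu a ha
    simp only [mem_insert, mem_singleton] at h'
    omega
  have h3 : ({u, v, w} : Finset ℕ).card = 3 := by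
    rw [card_insert_of_notMem (by simp only [mem_insert, mem_singleton]; omega),
      card_insert_of_notMem (by simp only [mem_singleton]; omega), card_singleton]
  rw [card_union_of_disjoint hdis, h3]

lemma blk_card {t i x : ℕ} {A : Finset ℕ} (hA : A ⊆ Finset.Icc 1 (t+2*i))
    (hAc : A.card = t) (hx : t+3+2*i ≤ x) : (blk t i x A).card = t+3 := by
  rw [blk, card_union_three (fun a ha => by have := mem_Icc.1 (hA ha); omega)
    (by omega) (by omega), hAc]

lemma blk_subset {t d i x : ℕ} {A : Finset ℕ} (hA : A ⊆ Finset.Icc 1 (t+2*i))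
    (hi : 2*i+1 ≤ d) (hx1 : 1 ≤ x) (hx2 : x ≤ t+2+d) :
    blk t i x A ⊆ Finset.Icc 1 (t+2+d) := by
  intro a ha
  rw [mem_blk] at ha
  rcases ha with h | h | h | h
  · have := mem_Icc.1 (hA h); rw [mem_Icc]; omega
  · rw [mem_Icc]; omega
  · rw [mem_Icc]; omega
  · rw [mem_Icc]; omega

lemma blk_mem_famB {t d i x : ℕ} {A : Finset ℕ} {B₀ : Finset (Finset ℕ)}
    (hi : i < (d+1)/2) (hA : A ⊆ Finset.Icc 1 (t+2*i)) (hAc : A.card = t)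
    (hx1 : t+3+2*i ≤ x) (hx2 : x ≤ t+2+d) :
    blk t i x A ∈ famB t d B₀ := by
  apply mem_union_left
  apply mem_union_left
  exact mem_biUnion.2 ⟨i, mem_range.2 hi, mem_image.2 ⟨(A, x),
    mem_product.2 ⟨mem_powersetCard.2 ⟨hA, hAc⟩, mem_Icc.2 ⟨hx1, hx2⟩⟩, rfl⟩⟩

lemma conn_mem_famB {t d i : ℕ} {B₀ : Finset (Finset ℕ)} (hi : i < (d+1)/2 - 1) :
    conn t i ∈ famB t d B₀ :=
  mem_union_left _ (mem_union_right _ (mem_image.2 ⟨i, mem_range.2 hi, rfl⟩))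

lemma covering_famB (t d : ℕ) (hd : 1 ≤ d) (B₀ : Finset (Finset ℕ))
    (hB₀ : ∀ b ∈ B₀, b ⊆ Finset.Icc 1 (t+d) ∧ b.card = t+1)
    (hB₀cov : Even d → ∀ s ⊆ Finset.Icc 1 (t+d), s.card = t → ∃ b ∈ B₀, s ⊆ b) :
    IsCovering (t+2+d) (t+3) (t+2) (famB t d B₀) := by
  constructor
  · intro b hb
    rcases mem_union.1 hb with h | h
    · rcases mem_union.1 h with h' | h'
      · obtain ⟨i, hi, hbl⟩ := mem_biUnion.1 h'
        obtain ⟨⟨A, x⟩, hP, rfl⟩ := mem_image.1 hbl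
        obtain ⟨hA, hx⟩ := mem_product.1 hP
        obtain ⟨hAs, hAc⟩ := mem_powersetCard.1 hA
        obtain ⟨hx1, hx2⟩ := mem_Icc.1 hx
        have hi' := mem_range.1 hi
        refine ⟨blk_subset hAs (by omega) (by omega) hx2, blk_card hAs hAc hx1⟩
      · obtain ⟨i, hi, rfl⟩ := mem_image.1 h'
        have hi' := mem_range.1 hi
        constructor
        · intro a ha
          rcases mem_conn.1 ha with h'' | h'' | h'' | h''
          · have := mem_Icc.1 h''; rw [mem_Icc]; omega
          · rw [mem_Icc]; omega
          · rw [mem_Icc]; omega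
          · rw [mem_Icc]; omega
        · rw [conn, card_union_three (fun a ha => by have := mem_Icc.1 ha; omega)
            (by omega) (by omega), Nat.card_Icc]
          omega
    · obtain ⟨b₀, hb₀, rfl⟩ := mem_image.1 h
      obtain ⟨hsub, hc⟩ := hB₀ b₀ hb₀
      constructor
      · intro a ha
        rcases mem_union.1 ha with h' | h'
        · have := mem_Icc.1 (hsub h'); rw [mem_Icc]; omega
        · simp only [mem_insert, mem_singleton] at h'; rw [mem_Icc]; omega
      · rw [card_union_two (fun a ha => by have := mem_Icc.1 (hsub ha); omega)
          (by omega), hc]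
  · intro s hs hcard
    have hsne : s.Nonempty := card_pos.1 (by omega)
    have hs₁mem : s.max' hsne ∈ s := s.max'_mem hsne
    set s₁ := s.max' hsne with hs₁def
    have hs'card : (s.erase s₁).card = t+1 := by
      rw [card_erase_of_mem hs₁mem, hcard]
      omega
    have hs'ne : (s.erase s₁).Nonempty := card_pos.1 (by omega)
    set s₂ := (s.erase s₁).max' hs'ne with hs₂def
    have hs₂mem' : s₂ ∈ s.erase s₁ := max'_mem _ _
    have hs₂mem : s₂ ∈ s := mem_of_mem_erase hs₂mem'
    have hs₂ne : s₂ ≠ s₁ := ne_of_mem_erase hs₂mem'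
    have h21 : s₂ < s₁ := lt_of_le_of_ne (le_max' s s₂ hs₂mem) hs₂ne
    have hle2 : ∀ a ∈ s, a ≠ s₁ → a ≤ s₂ := fun a ha hne =>
      le_max' _ a (mem_erase.2 ⟨hne, ha⟩)
    have hbd : ∀ a ∈ s, 1 ≤ a ∧ a ≤ t+2+d := fun a ha => mem_Icc.1 (hs ha)
    have hs₁le := (hbd s₁ hs₁mem).2
    have hs₂ge : t+1 ≤ s₂ := by
      have hsub : s.erase s₁ ⊆ Finset.Icc 1 s₂ := fun a ha =>
        mem_Icc.2 ⟨(hbd a (mem_of_mem_erase ha)).1, le_max' _ a ha⟩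
      have := card_le_card hsub
      rw [hs'card, Nat.card_Icc] at this; omega
    by_cases hcase : Even d ∧ s₂ = t+d+1
    · obtain ⟨hd2, hs₂eq⟩ := hcase
      have hsmc : ((s.erase s₁).erase s₂).card = t := by
        rw [card_erase_of_mem hs₂mem', hs'card]
        omega
      have hsmsub : (s.erase s₁).erase s₂ ⊆ Finset.Icc 1 (t+d) := by
        intro a ha
        have ha2 := mem_of_mem_erase ha
        have has : a ∈ s := mem_of_mem_erase ha2
        have h1 := (hbd a has).1
        have h2 := hle2 a has (ne_of_mem_erase ha2)
        have h3 := ne_of_mem_erase ha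
        rw [mem_Icc]; omega
      obtain ⟨b, hb, hsb⟩ := hB₀cov hd2 _ hsmsub hsmc
      refine ⟨b ∪ {t+d+1, t+d+2}, mem_union_right _ (mem_image.2 ⟨b, hb, rfl⟩), ?_⟩
      intro a ha
      rw [mem_union, mem_insert, mem_singleton]
      by_cases h1 : a = s₁
      · have := (hbd a ha).2; right; right; omega
      · by_cases h2 : a = s₂
        · right; left; omega
        · exact Or.inl (hsb (mem_erase.2 ⟨h2, mem_erase.2 ⟨h1, ha⟩⟩))
    · have hnc : Even d → s₂ ≤ t+d := by
        intro he
        by_contra hgt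
        exact hcase ⟨he, by omega⟩
      have hdm : d % 2 = 0 → s₂ ≤ t + d := fun h => hnc (Nat.even_iff.2 h)
      have hs₂top : s₂ ≤ t+d+1 := by omega
      set i := (s₂ - t - 1)/2 with hidef
      have hieq : s₂ = t+1+2*i ∨ s₂ = t+2+2*i := by omega
      have hid : 2*i+1 ≤ d := by
        rcases Nat.mod_two_eq_zero_or_one d with h' | h'
        · have := hdm h'; rcases hieq with h | h <;> omega
        · rcases hieq with h | h <;> omega
      have him : i < (d+1)/2 := by omega
      have hs₂le2 : s₂ ≤ t+2+2*i := by rcases hieq with h | h <;> omega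
      by_cases hc2 : t+3+2*i ≤ s₁
      · set low := (s.erase s₁) \ {t+1+2*i, t+2+2*i} with hlowdef
        have hlow1 : low ⊆ (s.erase s₁).erase s₂ := by
          intro a ha
          obtain ⟨ha1, ha2⟩ := mem_sdiff.1 ha
          simp only [mem_insert, mem_singleton] at ha2
          push_neg at ha2
          refine mem_erase.2 ⟨?_, ha1⟩
          rcases hieq with h | h <;> omega
        have hlowc : low.card ≤ t := by
          have := card_le_card hlow1
          rw [card_erase_of_mem hs₂mem', hs'card] at this
          omega
        have hlowsub : low ⊆ Finset.Icc 1 (t+2*i) := by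
          intro a ha
          obtain ⟨ha1, ha2⟩ := mem_sdiff.1 ha
          have has := mem_of_mem_erase ha1
          have h1 := (hbd a has).1
          have h2 := hle2 a has (ne_of_mem_erase ha1)
          simp only [mem_insert, mem_singleton] at ha2
          push_neg at ha2
          rw [mem_Icc]
          omega
        obtain ⟨A, hlowA, hAsub, hAcard⟩ :=
          exists_subsuperset_card_eq hlowsub hlowc (by rw [Nat.card_Icc]; omega)
        refine ⟨blk t i s₁ A, blk_mem_famB him hAsub hAcard hc2 hs₁le, ?_⟩
        intro a ha
        rw [mem_blk]
        by_cases h1 : a = s₁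
        · exact Or.inr (Or.inr (Or.inr h1))
        · by_cases h2 : a = t+1+2*i
          · exact Or.inr (Or.inl h2)
          · by_cases h3 : a = t+2+2*i
            · exact Or.inr (Or.inr (Or.inl h3))
            · refine Or.inl (hlowA (mem_sdiff.2 ⟨mem_erase.2 ⟨h1, ha⟩, ?_⟩))
              simp only [mem_insert, mem_singleton]
              omega
      · have hs₁eq : s₁ = t+2+2*i := by rcases hieq with h | h <;> omega
        have hs₂eq : s₂ = t+1+2*i := by rcases hieq with h | h <;> omega
        have hAc : ((s.erase s₁).erase s₂).card = t := by
          rw [card_erase_of_mem hs₂mem', hs'card]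
          omega
        have hAsub : (s.erase s₁).erase s₂ ⊆ Finset.Icc 1 (t+2*i) := by
          intro a ha
          have ha2 := mem_of_mem_erase ha
          have has := mem_of_mem_erase ha2
          have h1 := (hbd a has).1
          have h2 := hle2 a has (ne_of_mem_erase ha2)
          have h3 := ne_of_mem_erase ha
          rw [mem_Icc]; omega
        refine ⟨blk t i (t+2+d) ((s.erase s₁).erase s₂),
          blk_mem_famB him hAsub hAc (by omega) (by omega), ?_⟩
        intro a ha
        rw [mem_blk]
        by_cases h1 : a = s₁
        · right; right; left; omega
        · by_cases h2 : a = s₂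
          · right; left; omega
          · exact Or.inl (mem_erase.2 ⟨h2, mem_erase.2 ⟨h1, ha⟩⟩)

lemma card_famB (t d : ℕ) (B₀ : Finset (Finset ℕ)) :
    (famB t d B₀).card ≤
      (∑ i ∈ Finset.range ((d+1)/2), (d - 2*i) * (t + 2*i).choose t)
        + ((d+1)/2 - 1) + B₀.card := by
  have h0 := card_union_le
    ((Finset.range ((d+1)/2)).biUnion (lev t d) ∪
      (Finset.range ((d+1)/2 - 1)).image (conn t))
    (B₀.image fun A => A ∪ {t+d+1, t+d+2})
  have h1 := card_union_le ((Finset.range ((d+1)/2)).biUnion (lev t d))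
    ((Finset.range ((d+1)/2 - 1)).image (conn t))
  have h2 := card_biUnion_le (s := Finset.range ((d+1)/2)) (t := lev t d)
  have h3 : ∀ i ∈ Finset.range ((d+1)/2),
      (lev t d i).card ≤ (d - 2*i) * (t+2*i).choose t := by
    intro i _
    refine le_trans card_image_le ?_
    rw [card_product, card_powersetCard, Nat.card_Icc, Nat.card_Icc]
    have e1 : t+2*i+1-1 = t+2*i := by omega
    have e2 : t+2+d+1 - (t+3+2*i) = d - 2*i := by omega
    rw [e1, e2, Nat.mul_comm]
  have h5 := Finset.sum_le_sum h3
  have h4 := card_image_le (s := Finset.range ((d+1)/2 - 1)) (f := conn t)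
  rw [card_range] at h4
  have h6 := card_image_le (s := B₀) (f := fun A => A ∪ {t+d+1, t+d+2})
  unfold famB
  omega

lemma connected_famB (t d : ℕ) (hd : 1 ≤ d) (B₀ : Finset (Finset ℕ))
    (hB₀ : ∀ b ∈ B₀, b ⊆ Finset.Icc 1 (t+d) ∧ b.card = t+1)
    (hB₀empty : ¬Even d → B₀ = ∅) :
    IsConnectedFamily (t+2) (famB t d B₀) := by
  unfold IsConnectedFamily
  set F := famB t d B₀ with hF
  set G := SimpleGraph.fromRel
    (fun b c : F => (t+2 : ℕ) ≤ ((b : Finset ℕ) ∩ (c : Finset ℕ)).card) with hG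
  have step : ∀ (b c : Finset ℕ) (hb : b ∈ F) (hc : c ∈ F), t+2 ≤ (b ∩ c).card →
      G.Reachable ⟨b, hb⟩ ⟨c, hc⟩ := by
    intro b c hb hc h
    by_cases hbc : b = c
    · subst hbc
      exact SimpleGraph.Reachable.refl _
    · apply SimpleGraph.Adj.reachable
      rw [hG, SimpleGraph.fromRel_adj]
      exact ⟨fun hh => hbc (congrArg Subtype.val hh), Or.inl h⟩
  have istep : ∀ (b c X : Finset ℕ) (hb : b ∈ F) (hc : c ∈ F), X ⊆ b → X ⊆ c →
      t+2 ≤ X.card → G.Reachable ⟨b, hb⟩ ⟨c, hc⟩ := fun b c X hb hc h1 h2 h3 =>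
    step b c hb hc (h3.trans (card_le_card (subset_inter h1 h2)))
  have hIccsub : ∀ i : ℕ, Finset.Icc 1 t ⊆ Finset.Icc 1 (t+2*i) := fun i a ha => by
    have := mem_Icc.1 ha; rw [mem_Icc]; omega
  have hIcclt : ∀ (u : ℕ), t < u → ∀ a ∈ Finset.Icc 1 t, a < u := fun u hu a ha => by
    have := mem_Icc.1 ha; omega
  have hIcccard : (Finset.Icc 1 t).card = t := by rw [Nat.card_Icc]; omega
  have hub_mem : blk t 0 (t+2+d) (Finset.Icc 1 t) ∈ F :=
    blk_mem_famB (by omega) (hIccsub 0) hIcccard (by omega) (by omega)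
  -- connect within a level: change the bottom set one swap at a time
  have reach_A : ∀ (k i : ℕ) (A : Finset ℕ), i < (d+1)/2 →
      ∀ (hA : A ⊆ Finset.Icc 1 (t+2*i)) (hAc : A.card = t)
      (hk : (A \ Finset.Icc 1 t).card = k)
      (h1 : blk t i (t+2+d) A ∈ F) (h2 : blk t i (t+2+d) (Finset.Icc 1 t) ∈ F),
      G.Reachable ⟨blk t i (t+2+d) A, h1⟩ ⟨blk t i (t+2+d) (Finset.Icc 1 t), h2⟩ := by
    intro k
    induction k with
    | zero =>
      intro i A hi hA hAc hk h1 h2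
      have hsub : A ⊆ Finset.Icc 1 t := by
        intro a ha
        by_contra hna
        have hmem : a ∈ A \ Finset.Icc 1 t := mem_sdiff.2 ⟨ha, hna⟩
        rw [card_eq_zero.1 hk] at hmem
        exact absurd hmem (notMem_empty a)
      have hAeq : A = Finset.Icc 1 t :=
        eq_of_subset_of_card_le hsub (by rw [hAc, hIcccard])
      subst hAeq
      exact SimpleGraph.Reachable.refl _
    | succ j IH =>
      intro i A hi hA hAc hk h1 h2
      obtain ⟨a, ha⟩ : (A \ Finset.Icc 1 t).Nonempty := card_pos.1 (by omega)
      obtain ⟨haA, haI⟩ := mem_sdiff.1 ha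
      have htpos : 0 < t := hAc ▸ card_pos.2 ⟨a, haA⟩
      have hne1 : (Finset.Icc 1 t \ A).Nonempty := by
        rw [← card_pos]
        have hsub' : Finset.Icc 1 t ∩ A ⊆ A.erase a := fun x hx =>
          mem_erase.2 ⟨fun he => haI (he ▸ (mem_inter.1 hx).1), (mem_inter.1 hx).2⟩
        have h2' := card_le_card hsub'
        rw [card_erase_of_mem haA, hAc] at h2'
        have h3' := card_sdiff_add_card_inter (Finset.Icc 1 t) A
        omega
      obtain ⟨a', ha'⟩ := hne1
      obtain ⟨ha'I, ha'A⟩ := mem_sdiff.1 ha'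
      have haI' := mem_Icc.1 (hA haA)
      have hat : t < a := by
        by_contra h
        exact haI (mem_Icc.2 ⟨haI'.1, by omega⟩)
      have ha't := mem_Icc.1 ha'I
      have hA'c : (insert a' (A.erase a)).card = t := by
        rw [card_insert_of_notMem (fun h => ha'A (mem_of_mem_erase h)),
          card_erase_of_mem haA, hAc]
        omega
      have hA'sub : insert a' (A.erase a) ⊆ Finset.Icc 1 (t+2*i) := by
        intro x hx
        rcases mem_insert.1 hx with rfl | hx'
        · exact mem_Icc.2 ⟨ha't.1, by omega⟩
        · exact hA (mem_of_mem_erase hx')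
      have hk' : (insert a' (A.erase a) \ Finset.Icc 1 t).card = j := by
        have heq : insert a' (A.erase a) \ Finset.Icc 1 t
            = (A \ Finset.Icc 1 t).erase a := by
          ext x
          simp only [mem_sdiff, mem_erase, mem_insert]
          constructor
          · rintro ⟨rfl | ⟨hxa, hxA⟩, hxI⟩
            · exact absurd ha'I hxI
            · exact ⟨hxa, hxA, hxI⟩
          · rintro ⟨hxa, hxA, hxI⟩
            exact ⟨Or.inr ⟨hxa, hxA⟩, hxI⟩
        rw [heq, card_erase_of_mem ha, hk]
        omega
      have h1' : blk t i (t+2+d) (insert a' (A.erase a)) ∈ F :=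
        blk_mem_famB hi hA'sub hA'c (by omega) (by omega)
      refine (istep _ _ ((A.erase a) ∪ {t+1+2*i, t+2+2*i, t+2+d}) h1 h1' ?_ ?_ ?_).trans
        (IH i (insert a' (A.erase a)) hi hA'sub hA'c hk' h1' h2)
      · intro x hx
        rw [mem_blk]
        rcases mem_union.1 hx with h | h
        · exact Or.inl (mem_of_mem_erase h)
        · simp only [mem_insert, mem_singleton] at h
          omega
      · intro x hx
        rw [mem_blk]
        rcases mem_union.1 hx with h | h
        · exact Or.inl (mem_insert_of_mem h)
        · simp only [mem_insert, mem_singleton] at h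
          omega
      · have hcc : ((A.erase a) ∪ {t+1+2*i, t+2+2*i, t+2+d}).card
            = (A.erase a).card + 3 := by
          refine card_union_three (fun x hx => ?_) (by omega) (by omega)
          have := mem_Icc.1 (hA (mem_of_mem_erase hx)); omega
        rw [hcc, card_erase_of_mem haA, hAc]
        omega
  -- the spine: walk down the levels through the connectors
  have reach_spine : ∀ (i : ℕ), i < (d+1)/2 →
      ∀ (h1 : blk t i (t+2+d) (Finset.Icc 1 t) ∈ F),
      G.Reachable ⟨blk t i (t+2+d) (Finset.Icc 1 t), h1⟩
        ⟨blk t 0 (t+2+d) (Finset.Icc 1 t), hub_mem⟩ := by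
    intro i
    induction i with
    | zero =>
      intro hi h1
      exact SimpleGraph.Reachable.refl _
    | succ i IH =>
      intro hi h1
      have hi' : i < (d+1)/2 := by omega
      have hi'' : i < (d+1)/2 - 1 := by omega
      have hdi : 2*i+3 ≤ d := by omega
      have hc_mem : conn t i ∈ F := conn_mem_famB hi''
      have hb_mem : blk t i (t+3+2*i) (Finset.Icc 1 t) ∈ F :=
        blk_mem_famB hi' (hIccsub i) hIcccard (le_refl _) (by omega)
      have hs_mem : blk t i (t+2+d) (Finset.Icc 1 t) ∈ F :=
        blk_mem_famB hi' (hIccsub i) hIcccard (by omega) (by omega)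
      refine ((istep _ _ (Finset.Icc 1 t ∪ {t+3+2*i, t+4+2*i}) h1 hc_mem ?_ ?_ ?_).trans
        (istep _ _ (Finset.Icc 1 t ∪ {t+2+2*i, t+3+2*i}) hc_mem hb_mem ?_ ?_ ?_)).trans
        ((istep _ _ (Finset.Icc 1 t ∪ {t+1+2*i, t+2+2*i}) hb_mem hs_mem ?_ ?_ ?_).trans
          (IH hi' hs_mem))
      · intro x hx
        rw [mem_blk]
        rcases mem_union.1 hx with h | h
        · exact Or.inl h
        · simp only [mem_insert, mem_singleton] at h
          omega
      · intro x hx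
        rw [mem_conn]
        rcases mem_union.1 hx with h | h
        · exact Or.inl h
        · simp only [mem_insert, mem_singleton] at h
          omega
      · rw [card_union_two (hIcclt _ (by omega)) (by omega), hIcccard]
      · intro x hx
        rw [mem_conn]
        rcases mem_union.1 hx with h | h
        · exact Or.inl h
        · simp only [mem_insert, mem_singleton] at h
          omega
      · intro x hx
        rw [mem_blk]
        rcases mem_union.1 hx with h | h
        · exact Or.inl h
        · simp only [mem_insert, mem_singleton] at h
          omega
      · rw [card_union_two (hIcclt _ (by omega)) (by omega), hIcccard]
      · intro x hx
        rw [mem_blk]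
        rcases mem_union.1 hx with h | h
        · exact Or.inl h
        · simp only [mem_insert, mem_singleton] at h
          omega
      · intro x hx
        rw [mem_blk]
        rcases mem_union.1 hx with h | h
        · exact Or.inl h
        · simp only [mem_insert, mem_singleton] at h
          omega
      · rw [card_union_two (hIcclt _ (by omega)) (by omega), hIcccard]
  -- every level block reaches the hub
  have reach_lev : ∀ (i x : ℕ) (A : Finset ℕ), i < (d+1)/2 →
      ∀ (hA : A ⊆ Finset.Icc 1 (t+2*i)) (hAc : A.card = t)
      (hx1 : t+3+2*i ≤ x) (hx2 : x ≤ t+2+d) (h1 : blk t i x A ∈ F),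
      G.Reachable ⟨blk t i x A, h1⟩ ⟨blk t 0 (t+2+d) (Finset.Icc 1 t), hub_mem⟩ := by
    intro i x A hi hA hAc hx1 hx2 h1
    have h2 : blk t i (t+2+d) A ∈ F := blk_mem_famB hi hA hAc (by omega) (by omega)
    have h3 : blk t i (t+2+d) (Finset.Icc 1 t) ∈ F :=
      blk_mem_famB hi (hIccsub i) hIcccard (by omega) (by omega)
    refine (istep _ _ (A ∪ {t+1+2*i, t+2+2*i}) h1 h2 ?_ ?_ ?_).trans
      ((reach_A _ i A hi hA hAc rfl h2 h3).trans (reach_spine i hi h3))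
    · intro y hy
      rw [mem_blk]
      rcases mem_union.1 hy with h | h
      · exact Or.inl h
      · simp only [mem_insert, mem_singleton] at h
        omega
    · intro y hy
      rw [mem_blk]
      rcases mem_union.1 hy with h | h
      · exact Or.inl h
      · simp only [mem_insert, mem_singleton] at h
        omega
    · have hcc : (A ∪ {t+1+2*i, t+2+2*i}).card = A.card + 2 := by
        refine card_union_two (fun y hy => ?_) (by omega)
        have := mem_Icc.1 (hA hy); omega
      rw [hcc, hAc]
  -- connectors reach the hub
  have reach_conn : ∀ (i : ℕ), i < (d+1)/2 - 1 → ∀ (h1 : conn t i ∈ F),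
      G.Reachable ⟨conn t i, h1⟩ ⟨blk t 0 (t+2+d) (Finset.Icc 1 t), hub_mem⟩ := by
    intro i hi h1
    have hi' : i < (d+1)/2 := by omega
    have hdi : 2*i+3 ≤ d := by omega
    have hb : blk t i (t+3+2*i) (Finset.Icc 1 t) ∈ F :=
      blk_mem_famB hi' (hIccsub i) hIcccard (le_refl _) (by omega)
    refine (istep _ _ (Finset.Icc 1 t ∪ {t+2+2*i, t+3+2*i}) h1 hb ?_ ?_ ?_).trans
      (reach_lev i (t+3+2*i) _ hi' (hIccsub i) hIcccard (le_refl _) (by omega) hb)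
    · intro x hx
      rw [mem_conn]
      rcases mem_union.1 hx with h | h
      · exact Or.inl h
      · simp only [mem_insert, mem_singleton] at h
        omega
    · intro x hx
      rw [mem_blk]
      rcases mem_union.1 hx with h | h
      · exact Or.inl h
      · simp only [mem_insert, mem_singleton] at h
        omega
    · rw [card_union_two (hIcclt _ (by omega)) (by omega), hIcccard]
  -- the extra blocks reach the hub
  have reach_delta : ∀ (b₀ : Finset ℕ), b₀ ∈ B₀ → ∀ (h1 : b₀ ∪ {t+d+1, t+d+2} ∈ F),
      G.Reachable ⟨b₀ ∪ {t+d+1, t+d+2}, h1⟩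
        ⟨blk t 0 (t+2+d) (Finset.Icc 1 t), hub_mem⟩ := by
    intro b₀ hb₀ h1
    have hdeven : Even d := by
      by_contra h
      rw [hB₀empty h] at hb₀
      exact absurd hb₀ (notMem_empty _)
    have hdm : d % 2 = 0 := Nat.even_iff.1 hdeven
    obtain ⟨hbsub, hbc⟩ := hB₀ b₀ hb₀
    have hbne : b₀.Nonempty := card_pos.1 (by omega)
    have htm_mem : b₀.max' hbne ∈ b₀ := max'_mem _ _
    set tm := b₀.max' hbne with htm
    have htm_ub : ∀ a ∈ b₀, a ≤ tm := fun a ha => le_max' _ a ha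
    have htm_le : tm ≤ t+d := (mem_Icc.1 (hbsub htm_mem)).2
    have htm_ge : t+1 ≤ tm := by
      have hsub : b₀ ⊆ Finset.Icc 1 tm := fun a ha =>
        mem_Icc.2 ⟨(mem_Icc.1 (hbsub ha)).1, htm_ub a ha⟩
      have := card_le_card hsub
      rw [hbc, Nat.card_Icc] at this; omega
    set i := (tm - t - 1)/2 with hidef
    have hieq : tm = t+1+2*i ∨ tm = t+2+2*i := by omega
    have hi2 : 2*i + 2 ≤ d := by rcases hieq with h | h <;> omega
    have him : i < (d+1)/2 := by omega
    set low := b₀ \ {t+1+2*i, t+2+2*i} with hlowdef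
    have hlow1 : low ⊆ b₀.erase tm := by
      intro a ha
      obtain ⟨h1', h2'⟩ := mem_sdiff.1 ha
      simp only [mem_insert, mem_singleton] at h2'
      push_neg at h2'
      refine mem_erase.2 ⟨?_, h1'⟩
      rcases hieq with h | h <;> omega
    have hlowc : low.card ≤ t := by
      have := card_le_card hlow1
      rw [card_erase_of_mem htm_mem, hbc] at this; omega
    have hlowsub : low ⊆ Finset.Icc 1 (t+2*i) := by
      intro a ha
      obtain ⟨h1', h2'⟩ := mem_sdiff.1 ha
      have hb' := mem_Icc.1 (hbsub h1')
      have hub' := htm_ub a h1'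
      simp only [mem_insert, mem_singleton] at h2'
      push_neg at h2'
      rw [mem_Icc]
      rcases hieq with h | h <;> omega
    obtain ⟨A, hlowA, hAsub, hAc⟩ :=
      exists_subsuperset_card_eq hlowsub hlowc (by rw [Nat.card_Icc]; omega)
    have hc_mem : blk t i (t+1+d) A ∈ F :=
      blk_mem_famB him hAsub hAc (by omega) (by omega)
    refine (istep _ _ (b₀ ∪ {t+1+d}) h1 hc_mem ?_ ?_ ?_).trans
      (reach_lev i (t+1+d) A him hAsub hAc (by omega) (by omega) hc_mem)
    · intro x hx
      rcases mem_union.1 hx with h | h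
      · exact mem_union_left _ h
      · rw [mem_singleton] at h
        refine mem_union_right _ ?_
        simp only [mem_insert, mem_singleton]
        omega
    · intro x hx
      rw [mem_blk]
      rcases mem_union.1 hx with h | h
      · by_cases hx1 : x = t+1+2*i
        · exact Or.inr (Or.inl hx1)
        · by_cases hx2 : x = t+2+2*i
          · exact Or.inr (Or.inr (Or.inl hx2))
          · refine Or.inl (hlowA (mem_sdiff.2 ⟨h, ?_⟩))
            simp only [mem_insert, mem_singleton]
            tauto
      · rw [mem_singleton] at h
        omega
    · have hcc : (b₀ ∪ {t+1+d}).card = b₀.card + 1 := by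
        refine card_union_one (fun a ha => ?_)
        have := mem_Icc.1 (hbsub ha); omega
      rw [hcc, hbc]
  -- every block reaches the hub
  have reach_all : ∀ (b : Finset ℕ) (hb : b ∈ F),
      G.Reachable ⟨b, hb⟩ ⟨blk t 0 (t+2+d) (Finset.Icc 1 t), hub_mem⟩ := by
    intro b hb
    rcases mem_union.1 hb with h | h
    · rcases mem_union.1 h with h' | h'
      · obtain ⟨i, hi, hbl⟩ := mem_biUnion.1 h'
        obtain ⟨⟨A, x⟩, hP, rfl⟩ := mem_image.1 hbl
        obtain ⟨hA, hx⟩ := mem_product.1 hP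
        obtain ⟨hAs, hAc⟩ := mem_powersetCard.1 hA
        obtain ⟨hx1, hx2⟩ := mem_Icc.1 hx
        exact reach_lev i x A (mem_range.1 hi) hAs hAc hx1 hx2 hb
      · obtain ⟨i, hi, rfl⟩ := mem_image.1 h'
        exact reach_conn i (mem_range.1 hi) hb
    · obtain ⟨b₀, hb₀, rfl⟩ := mem_image.1 h
      exact reach_delta b₀ hb₀ hb
  have : Nonempty { x // x ∈ F } := ⟨⟨_, hub_mem⟩⟩
  exact SimpleGraph.Connected.mk
    (fun u v => (reach_all u.1 u.2).trans (reach_all v.1 v.2).symm)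

end Stmt17

theorem stmt_17 (n r : ℕ) (hr : 3 ≤ r + 1) (hn : r + 1 ≤ n) :
    ccNum n r ≤ boundN n r := by
  obtain ⟨t, rfl⟩ : ∃ t, r = t + 2 := ⟨r - 2, by omega⟩
  obtain ⟨d, hd1, rfl⟩ : ∃ d, 1 ≤ d ∧ n = t + 2 + d :=
    ⟨n - (t+2), by omega, by omega⟩
  obtain ⟨B₀, hB₀cov, hB₀card, hB₀empty⟩ : ∃ B₀ : Finset (Finset ℕ),
      (Even d → IsCovering (t+d) (t+1) t B₀) ∧
      B₀.card = (if Even d then cNum (t+d) t else 0) ∧ (¬Even d → B₀ = ∅) := by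
    by_cases he : Even d
    · have hwit : IsCovering (t+d) (t+1) t ((Finset.Icc 1 (t+d)).powersetCard (t+1)) := by
        constructor
        · intro b hb
          exact mem_powersetCard.1 hb
        · intro s hs hsc
          obtain ⟨u, hsu, husub, huc⟩ := Finset.exists_subsuperset_card_eq (n := t+1) hs (by omega)
            (by rw [Nat.card_Icc]; omega)
          exact ⟨u, mem_powersetCard.2 ⟨husub, huc⟩, hsu⟩
      have hne : {m | ∃ B : Finset (Finset ℕ),
          IsCovering (t+d) (t+1) t B ∧ B.card = m}.Nonempty := ⟨_, _, hwit, rfl⟩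
      obtain ⟨B₀, hB₀, hcard⟩ := Nat.sInf_mem hne
      exact ⟨B₀, fun _ => hB₀, by rw [if_pos he]; exact hcard, fun h => absurd he h⟩
    · exact ⟨∅, fun h => absurd h he, by simp [he], fun _ => rfl⟩
  have hB₀blocks : ∀ b ∈ B₀, b ⊆ Finset.Icc 1 (t+d) ∧ b.card = t+1 := by
    by_cases he : Even d
    · exact (hB₀cov he).1
    · intro b hb
      rw [hB₀empty he] at hb
      exact absurd hb (notMem_empty _)
  have hcov := Stmt17.covering_famB t d hd1 B₀ hB₀blocks (fun he => (hB₀cov he).2)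
  have hconn := Stmt17.connected_famB t d hd1 B₀ hB₀blocks hB₀empty
  have hle : ccNum (t+2+d) (t+2) ≤ (Stmt17.famB t d B₀).card :=
    Nat.sInf_le ⟨Stmt17.famB t d B₀, hcov, hconn, rfl⟩
  have hcard := Stmt17.card_famB t d B₀
  unfold boundN
  simp only [show t+2+d - (t+2) = d from by omega, show (t+2) - 2 = t from by omega,
    show t+2+d-2 = t+d from by omega]
  by_cases he : Even d
  · rw [if_pos he]
    rw [if_pos he] at hB₀card
    omega
  · rw [if_neg he]
    rw [if_neg he] at hB₀card
    omega
end
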